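/- arXiv:1511.06664 — 7 statements merged into one kernel-verified Lean document; each statement's English description precedes it below -/
import Mathlib

section
/- Let C be a Cauchon diagram on a Young diagram and let (x,y) be a white square of C such that at least one square (r,c) of the diagram with r < x and c < y is white. Then there exists a white square (a,b) of C with a < x and b < y such that every white square (r,c) of C with r < x and c < y satisfies r ≤ a and c ≤ b; in particular, the set of white squares strictly northwest of (x,y) has a (necessarily unique) maximum in the componentwise order. -/
/-!
Let `a` be the largest row and `b` the largest column occurring among the white squares strictly
northwest of `(x, y)`. Then `(a, b)` lies in the diagram, since `b < y ≤ λ_x ≤ λ_a`. Some white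
square `(a, c)` has `c ≤ b`, and some white square `(r, b)` has `r ≤ a`. If either inequality is
an equality, `(a, b)` itself is white. Otherwise `(a, b)` has a white square to its left and one
above it, so the Cauchon condition makes it white. In both cases `(a, b)` is the maximum.
-/

theorem Finset.exists_isGreatest_of_corner_mem {α β : Type*} [LinearOrder α] [LinearOrder β]
    {S : Finset (α × β)} (hS : S.Nonempty)
    (hcorner : ∀ a b c r, (a, c) ∈ S → c < b → (r, b) ∈ S → r < a → (a, b) ∈ S) :
    ∃ p, IsGreatest (S : Set (α × β)) p := by
  set a := S.sup' hS Prod.fst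
  set b := S.sup' hS Prod.snd
  have hupper : (a, b) ∈ upperBounds (S : Set (α × β)) := fun q hq =>
    Prod.mk_le_mk.2 ⟨S.le_sup' Prod.fst hq, S.le_sup' Prod.snd hq⟩
  obtain ⟨⟨a', c⟩, hac, ha⟩ := S.exists_mem_eq_sup' hS Prod.fst
  obtain ⟨⟨r, b'⟩, hrb, hb⟩ := S.exists_mem_eq_sup' hS Prod.snd
  obtain rfl : a' = a := ha.symm
  obtain rfl : b' = b := hb.symm
  refine ⟨(a, b), ?_, hupper⟩
  obtain hcb | rfl := (Prod.mk_le_mk.1 (hupper hac)).2.lt_or_eq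
  · obtain hra | rfl := (Prod.mk_le_mk.1 (hupper hrb)).1.lt_or_eq
    · exact hcorner a b c r hac hcb hrb hra
    · exact hrb
  · exact hac

theorem nearest_white_square_strict_northwest_general
    (m : ℕ) (lam : ℕ → ℕ)
    (hmono : ∀ r r', 1 ≤ r → r ≤ r' → r' ≤ m → lam r' ≤ lam r)
    (col : ℕ × ℕ → Bool)
    (hC : ∀ r c, 1 ≤ r → r ≤ m → 1 ≤ c → c ≤ lam r → col (r, c) = true →
      ¬((∃ c', 1 ≤ c' ∧ c' < c ∧ col (r, c') = false) ∧
        (∃ r', 1 ≤ r' ∧ r' < r ∧ col (r', c) = false)))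
    (x y : ℕ) (hxm : x ≤ m) (hyl : y ≤ lam x)
    (hex : ∃ r c, 1 ≤ r ∧ r ≤ m ∧ 1 ≤ c ∧ c ≤ lam r ∧ r < x ∧ c < y ∧
      col (r, c) = false) :
    ∃ a b, 1 ≤ a ∧ a ≤ m ∧ 1 ≤ b ∧ b ≤ lam a ∧ a < x ∧ b < y ∧ col (a, b) = false ∧
      ∀ r c, 1 ≤ r → r ≤ m → 1 ≤ c → c ≤ lam r → r < x → c < y →
        col (r, c) = false → r ≤ a ∧ c ≤ b := by
  set S := (Finset.Ico 1 x ×ˢ Finset.Ico 1 y).filter (fun p => col p = false)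
  have hmem : ∀ r c, (r, c) ∈ S ↔ (1 ≤ r ∧ r < x) ∧ (1 ≤ c ∧ c < y) ∧ col (r, c) = false := by
    simp [S, and_assoc]
  have hlam : ∀ a, 1 ≤ a → a < x → y ≤ lam a := fun a ha hax =>
    hyl.trans (hmono a x ha hax.le hxm)
  have hne : S.Nonempty := by
    obtain ⟨r, c, hr, -, hc, -, hrx, hcy, hrc⟩ := hex
    exact ⟨(r, c), (hmem r c).2 ⟨⟨hr, hrx⟩, ⟨hc, hcy⟩, hrc⟩⟩
  have hcorner : ∀ a b c r, (a, c) ∈ S → c < b → (r, b) ∈ S → r < a → (a, b) ∈ S := by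
    intro a b c r hac hcb hrb hra
    obtain ⟨⟨ha, hax⟩, ⟨hc, -⟩, hacw⟩ := (hmem a c).1 hac
    obtain ⟨⟨hr, -⟩, ⟨-, hby⟩, hrbw⟩ := (hmem r b).1 hrb
    refine (hmem a b).2 ⟨⟨ha, hax⟩, ⟨hc.trans hcb.le, hby⟩, ?_⟩
    by_contra hblack
    exact hC a b ha (hax.le.trans hxm) (hc.trans hcb.le) (hby.le.trans (hlam a ha hax))
      (Bool.not_eq_false _ ▸ hblack) ⟨⟨c, hc, hcb, hacw⟩, ⟨r, hr, hra, hrbw⟩⟩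
  obtain ⟨⟨a, b⟩, hab, hmax⟩ := S.exists_isGreatest_of_corner_mem hne hcorner
  obtain ⟨⟨ha, hax⟩, ⟨hb, hby⟩, habw⟩ := (hmem a b).1 hab
  refine ⟨a, b, ha, hax.le.trans hxm, hb, hby.le.trans (hlam a ha hax), hax, hby, habw, ?_⟩
  intro r c hr _ hc _ hrx hcy hrc
  exact Prod.mk_le_mk.1 (hmax ((hmem r c).2 ⟨⟨hr, hrx⟩, ⟨hc, hcy⟩, hrc⟩))

/-- A Cauchon diagram on the Young diagram of shape `lam` (rows `1,...,m` top to bottom,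
row `r` having columns `1,...,lam r`; `col = true` means black, `col = false` means white):
if `(x,y)` is a white square having at least one white square strictly north-west of it
(i.e. some white `(r,c)` with `r < x`, `c < y`), then the set of white squares strictly
north-west of `(x,y)` has a maximum in the componentwise order. -/
theorem nearest_white_square_strict_northwest
    (m : ℕ) (lam : ℕ → ℕ) (hm : 1 ≤ m)
    (hmono : ∀ r r', 1 ≤ r → r ≤ r' → r' ≤ m → lam r' ≤ lam r)
    (hpos : ∀ r, 1 ≤ r → r ≤ m → 1 ≤ lam r)
    (col : ℕ × ℕ → Bool)
    (hC : ∀ r c, 1 ≤ r → r ≤ m → 1 ≤ c → c ≤ lam r → col (r, c) = true →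
      ¬((∃ c', 1 ≤ c' ∧ c' < c ∧ col (r, c') = false) ∧
        (∃ r', 1 ≤ r' ∧ r' < r ∧ col (r', c) = false)))
    (x y : ℕ) (hx1 : 1 ≤ x) (hxm : x ≤ m) (hy1 : 1 ≤ y) (hyl : y ≤ lam x)
    (hwhite : col (x, y) = false)
    (hex : ∃ r c, 1 ≤ r ∧ r ≤ m ∧ 1 ≤ c ∧ c ≤ lam r ∧ r < x ∧ c < y ∧
      col (r, c) = false) :
    ∃ a b, 1 ≤ a ∧ a ≤ m ∧ 1 ≤ b ∧ b ≤ lam a ∧ a < x ∧ b < y ∧ col (a, b) = false ∧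
      ∀ r c, 1 ≤ r → r ≤ m → 1 ≤ c → c ≤ lam r → r < x → c < y →
        col (r, c) = false → r ≤ a ∧ c ≤ b :=
  nearest_white_square_strict_northwest_general m lam hmono col hC x y hxm hyl hex
end

section
/- Let C be a Cauchon diagram on a Young diagram and let (x,y) be a black square of C such that at least one square (r,c) of the diagram with r ≤ x and c ≤ y is white. Then there exists a white square (a,b) of C with a ≤ x and b ≤ y such that every white square (r,c) of C with r ≤ x and c ≤ y satisfies r ≤ a and c ≤ b; in particular, the set of white squares weakly northwest of (x,y) has a (necessarily unique) maximum in the componentwise order. -/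
/-- A Cauchon diagram on the Young diagram of shape `lam` (rows `1,...,m` top to bottom,
row `r` having columns `1,...,lam r`; `col = true` means black, `col = false` means white):
if `(x,y)` is a black square having at least one white square weakly north-west of it
(i.e. some white `(r,c)` with `r ≤ x`, `c ≤ y`), then the set of white squares weakly
north-west of `(x,y)` has a maximum in the componentwise order. -/
theorem nearest_white_square_weak_northwest
    (m : ℕ) (lam : ℕ → ℕ) (hm : 1 ≤ m)
    (hmono : ∀ r r', 1 ≤ r → r ≤ r' → r' ≤ m → lam r' ≤ lam r)
    (hpos : ∀ r, 1 ≤ r → r ≤ m → 1 ≤ lam r)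
    (col : ℕ × ℕ → Bool)
    (hC : ∀ r c, 1 ≤ r → r ≤ m → 1 ≤ c → c ≤ lam r → col (r, c) = true →
      ¬((∃ c', 1 ≤ c' ∧ c' < c ∧ col (r, c') = false) ∧
        (∃ r', 1 ≤ r' ∧ r' < r ∧ col (r', c) = false)))
    (x y : ℕ) (hx1 : 1 ≤ x) (hxm : x ≤ m) (hy1 : 1 ≤ y) (hyl : y ≤ lam x)
    (hblack : col (x, y) = true)
    (hex : ∃ r c, 1 ≤ r ∧ r ≤ m ∧ 1 ≤ c ∧ c ≤ lam r ∧ r ≤ x ∧ c ≤ y ∧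
      col (r, c) = false) :
    ∃ a b, 1 ≤ a ∧ a ≤ m ∧ 1 ≤ b ∧ b ≤ lam a ∧ a ≤ x ∧ b ≤ y ∧ col (a, b) = false ∧
      ∀ r c, 1 ≤ r → r ≤ m → 1 ≤ c → c ≤ lam r → r ≤ x → c ≤ y →
        col (r, c) = false → r ≤ a ∧ c ≤ b := by
  classical
  set P : ℕ → Prop := fun r => 1 ≤ r ∧ r ≤ x ∧ ∃ c, 1 ≤ c ∧ c ≤ y ∧ col (r, c) = false with hP
  set Q : ℕ → Prop := fun c => 1 ≤ c ∧ c ≤ y ∧ ∃ r, 1 ≤ r ∧ r ≤ x ∧ col (r, c) = false with hQ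
  obtain ⟨r0, c0, hr01, _, hc01, _, hr0x, hc0y, hw0⟩ := hex
  set a := Nat.findGreatest P x with ha
  set b := Nat.findGreatest Q y with hb
  have hPa : P a := Nat.findGreatest_spec hr0x ⟨hr01, hr0x, c0, hc01, hc0y, hw0⟩
  have hQb : Q b := Nat.findGreatest_spec hc0y ⟨hc01, hc0y, r0, hr01, hr0x, hw0⟩
  obtain ⟨ha1, hax, c1, hc11, hc1y, hwc1⟩ := hPa
  obtain ⟨hb1, hby, r1, hr11, hr1x, hwr1⟩ := hQb
  have ham : a ≤ m := le_trans hax hxm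
  have hbla : b ≤ lam a := le_trans hby (le_trans hyl (hmono a x ha1 hax hxm))
  have hmaxr : ∀ r c, 1 ≤ r → 1 ≤ c → r ≤ x → c ≤ y → col (r, c) = false → r ≤ a ∧ c ≤ b := by
    intro r c hr1 hc1 hrx hcy hw
    exact ⟨Nat.le_findGreatest hrx ⟨hr1, hrx, c, hc1, hcy, hw⟩,
      Nat.le_findGreatest hcy ⟨hc1, hcy, r, hr1, hrx, hw⟩⟩
  have hwab : col (a, b) = false := by
    by_contra h
    have hblk : col (a, b) = true := by
      cases hcol : col (a, b) with
      | false => exact absurd hcol h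
      | true => rfl
    have hc1b : c1 ≤ b := (hmaxr a c1 ha1 hc11 hax hc1y hwc1).2
    have hr1a : r1 ≤ a := (hmaxr r1 b hr11 hb1 hr1x hby hwr1).1
    have hc1lt : c1 < b := lt_of_le_of_ne hc1b (by rintro rfl; exact h hwc1)
    have hr1lt : r1 < a := lt_of_le_of_ne hr1a (by rintro rfl; exact h hwr1)
    exact hC a b ha1 ham hb1 hbla hblk ⟨⟨c1, hc11, hc1lt, hwc1⟩, ⟨r1, hr11, hr1lt, hwr1⟩⟩
  exact ⟨a, b, ha1, ham, hb1, hbla, hax, hby, hwab,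
    fun r c hr1 _ hc1 _ hrx hcy hw => hmaxr r c hr1 hc1 hrx hcy hw⟩
end

section
/- For k ∈ {1,...,n}, let w_k ∈ S_{m+n} be the reading word of the set of all squares (a,b) of the grid with b ≤ m+k (that is, the reading word of the all-black m×k subgrid). Then w_k^{-1} = σ_k^k, where σ_k ∈ S_{m+n} is the permutation mapping j to j+1 for j ∈ {1,...,m+k-1}, mapping m+k to 1, and fixing every element of {m+k+1,...,m+n}. In particular, for k = n, the reading word of the set of all squares of the full m×n grid equals c^m, where c ∈ S_{m+n} is the cycle mapping j to j+1 for j ∈ {1,...,m+n-1} and m+n to 1. -/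
/-- The transposition `s_{a+b-m-1} = (a+b-m-1, a+b-m)` assigned to the grid square `(a,b)`. -/
def sqPerm (m : ℕ) (p : ℕ × ℕ) : Equiv.Perm ℕ :=
  Equiv.swap (p.1 + p.2 - m - 1) (p.1 + p.2 - m)

/-- The reading word of the set of grid squares satisfying `P`: rows are read from the
top (`a = m`) down to the bottom (`a = 1`), and within each row columns are read from the
left (`b = m+1`) to the right (`b = m+n`); factors are multiplied so that the last factor
in reading order is applied first. -/
def readingWord (m n : ℕ) (P : ℕ × ℕ → Bool) : Equiv.Perm ℕ :=
  ((List.range m).map fun i =>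
    (((List.range n).map fun j =>
      if P (m - i, m + 1 + j) then sqPerm m (m - i, m + 1 + j) else 1)).prod).prod

/-- `(a,b)` is a square of the `m × n` grid: `1 ≤ a ≤ m`, `m+1 ≤ b ≤ m+n`. -/
def InGrid (m n : ℕ) (p : ℕ × ℕ) : Prop :=
  1 ≤ p.1 ∧ p.1 ≤ m ∧ m + 1 ≤ p.2 ∧ p.2 ≤ m + n

/-- A colouring (`true` = black, `false` = white) is a Cauchon diagram if for every black
square `(a,b)`, either every square `(a,b')` with `b' < b` is black, or every square
`(a',b)` with `a' > a` is black. -/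
def IsCauchon (m n : ℕ) (col : ℕ × ℕ → Bool) : Prop :=
  ∀ a b, InGrid m n (a, b) → col (a, b) = true →
    (∀ b', m + 1 ≤ b' → b' < b → col (a, b') = true) ∨
    (∀ a', a < a' → a' ≤ m → col (a', b) = true)

/-- The permutation associated to a colouring: the reading word of its set of black squares. -/
def assocPerm (m n : ℕ) (col : ℕ × ℕ → Bool) : Equiv.Perm ℕ :=
  readingWord m n col

/-- `v_{x,y}`: the reading word of the black squares `(a,b)` with `a ≥ x` and `b ≤ y`. -/
def vAt (m n : ℕ) (col : ℕ × ℕ → Bool) (x y : ℕ) : Equiv.Perm ℕ :=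
  readingWord m n fun p => col p && decide (x ≤ p.1) && decide (p.2 ≤ y)

/-- `w_{x,y}`: the reading word of all grid squares `(a,b)` with `a ≥ x` and `b ≤ y`. -/
def wAt (m n x y : ℕ) : Equiv.Perm ℕ :=
  readingWord m n fun p => decide (x ≤ p.1) && decide (p.2 ≤ y)

/-- Box `k` on the south-east border: `(1, m+k)` if `k ≤ n`, and `(k-n+1, m+n)` otherwise. -/
def boxSE (m n k : ℕ) : ℕ × ℕ :=
  if k ≤ n then (1, m + k) else (k - n + 1, m + n)

/-- `(X 1, Y 1), ..., (X t, Y t)` is the chain rooted at the square `(x,y)` of the colouring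
`col` (with `t = 0` for the empty chain). -/
def IsChainRootedAt (m n : ℕ) (col : ℕ × ℕ → Bool) (x y : ℕ)
    (t : ℕ) (X Y : ℕ → ℕ) : Prop :=
  -- every member of the chain is a white square of the grid
  (∀ i, 1 ≤ i → i ≤ t → InGrid m n (X i, Y i) ∧ col (X i, Y i) = false) ∧
  -- if `(x,y)` is white, the chain starts at `(x,y)`
  (col (x, y) = false → 1 ≤ t ∧ X 1 = x ∧ Y 1 = y) ∧
  -- if `(x,y)` is black and the chain is nonempty, it starts at the white square
  -- weakly north-west of `(x,y)` nearest to it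
  (col (x, y) = true → 1 ≤ t →
    x ≤ X 1 ∧ Y 1 ≤ y ∧
      ∀ a b, InGrid m n (a, b) → col (a, b) = false → x ≤ a → b ≤ y →
        X 1 ≤ a ∧ b ≤ Y 1) ∧
  -- the chain is empty only when there is no white square weakly north-west of `(x,y)`
  (t = 0 → ∀ a b, InGrid m n (a, b) → col (a, b) = false → x ≤ a → b ≤ y → False) ∧
  -- inductive step: each next member is the nearest white square strictly north-west
  (∀ i, 1 ≤ i → i < t →
    X i < X (i + 1) ∧ Y (i + 1) < Y i ∧
      ∀ a b, InGrid m n (a, b) → col (a, b) = false → X i < a → b < Y i →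
        X (i + 1) ≤ a ∧ b ≤ Y (i + 1)) ∧
  -- termination: no white square strictly north-west of the last member
  (1 ≤ t → ∀ a b, InGrid m n (a, b) → col (a, b) = false → X t < a → b < Y t → False)


def swapChain (a k : ℕ) : Equiv.Perm ℕ :=
  ((List.range k).map fun j => Equiv.swap (a + j) (a + j + 1)).prod

lemma swapChain_apply (a k : ℕ) : ∀ x,
    swapChain a k x =
      if a ≤ x ∧ x < a + k then x + 1
      else if 0 < k ∧ x = a + k then a else x := by
  induction k with
  | zero =>
    intro x
    simp only [swapChain, List.range_zero, List.map_nil, List.prod_nil, Equiv.Perm.one_apply]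
    split_ifs <;> omega
  | succ k ih =>
    intro x
    have h : swapChain a (k + 1) = swapChain a k * Equiv.swap (a + k) (a + k + 1) := by
      simp [swapChain, List.range_succ]
    rw [h, Equiv.Perm.mul_apply]
    rcases eq_or_ne x (a + k) with h1 | h1
    · subst h1
      rw [Equiv.swap_apply_left, ih]
      split_ifs <;> omega
    · rcases eq_or_ne x (a + k + 1) with h2 | h2
      · subst h2
        rw [Equiv.swap_apply_right, ih]
        split_ifs <;> omega
      · rw [Equiv.swap_apply_of_ne_of_ne h1 h2, ih]
        split_ifs <;> omega

def gridWord (m k t : ℕ) : Equiv.Perm ℕ :=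
  ((List.range t).map fun i => swapChain (m - i) k).prod

lemma gridWord_apply (m k : ℕ) (hk : 1 ≤ k) :
    ∀ t, t ≤ m → ∀ x,
      gridWord m k t x =
        if m - t < x ∧ x ≤ m + k - t then x + t
        else if m + k - t < x ∧ x ≤ m + k then x - k else x := by
  intro t
  induction t with
  | zero =>
    intro _ x
    simp only [gridWord, List.range_zero, List.map_nil, List.prod_nil, Equiv.Perm.one_apply]
    split_ifs <;> omega
  | succ t ih =>
    intro ht x
    have hrec : gridWord m k (t + 1) = gridWord m k t * swapChain (m - t) k := by
      simp [gridWord, List.range_succ]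
    rw [hrec, Equiv.Perm.mul_apply, swapChain_apply]
    have ht' : t ≤ m := by omega
    split_ifs with h1 h2 <;> rw [ih ht'] <;> split_ifs <;> omega


lemma perm_pow_fix (σ : Equiv.Perm ℕ) (x : ℕ) (h : σ x = x) : ∀ r, (σ ^ r) x = x := by
  intro r
  induction r with
  | zero => rfl
  | succ r ih => rw [pow_succ, Equiv.Perm.mul_apply, h, ih]

lemma cyc_pow_shift (σ : Equiv.Perm ℕ) (M : ℕ)
    (hσ1 : ∀ j, 1 ≤ j → j ≤ M - 1 → σ j = j + 1) :
    ∀ r x, 1 ≤ x → x + r ≤ M → (σ ^ r) x = x + r := by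
  intro r
  induction r with
  | zero => intro x _ _; simp
  | succ r ih =>
    intro x hx h
    rw [pow_succ, Equiv.Perm.mul_apply, hσ1 x hx (by omega), ih (x + 1) (by omega) (by omega)]
    omega

lemma cyc_pow_wrap (σ : Equiv.Perm ℕ) (M : ℕ)
    (hσ1 : ∀ j, 1 ≤ j → j ≤ M - 1 → σ j = j + 1) (hσ2 : σ M = 1)
    (K x : ℕ) (hx1 : 1 ≤ x) (hxM : x ≤ M) (hw : M < x + K) (hKM : K ≤ M) :
    (σ ^ K) x = x + K - M := by
  have hdec : σ ^ K = σ ^ (K - (M - x) - 1) * σ ^ 1 * σ ^ (M - x) := by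
    rw [← pow_add, ← pow_add]
    congr 1
    omega
  rw [hdec, Equiv.Perm.mul_apply, Equiv.Perm.mul_apply,
      cyc_pow_shift σ M hσ1 (M - x) x hx1 (by omega),
      show x + (M - x) = M from by omega, pow_one, hσ2,
      cyc_pow_shift σ M hσ1 (K - (M - x) - 1) 1 le_rfl (by omega)]
  omega

lemma prod_if_lt (f : ℕ → Equiv.Perm ℕ) :
    ∀ n k, k ≤ n →
      ((List.range n).map fun j => if j < k then f j else 1).prod
        = ((List.range k).map f).prod := by
  intro n
  induction n with
  | zero =>
    intro k hk
    have : k = 0 := by omega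
    subst this; rfl
  | succ n ih =>
    intro k hk
    rcases Nat.lt_or_ge k (n + 1) with h | h
    · rw [List.range_succ, List.map_append, List.prod_append]
      simp only [List.map_cons, List.map_nil, List.prod_cons, List.prod_nil]
      rw [if_neg (by omega), mul_one, ih k (by omega)]
      rw [mul_one]
    · have : k = n + 1 := by omega
      subst this
      congr 1
      apply List.map_congr_left
      intro a ha
      rw [if_pos (List.mem_range.mp ha)]

lemma readingWord_le_eq (m n k : ℕ) (hkn : k ≤ n) :
    readingWord m n (fun p => decide (p.2 ≤ m + k)) = gridWord m k m := by
  unfold readingWord gridWord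
  congr 1
  apply List.map_congr_left
  intro i _
  have h1 : ∀ j : ℕ,
      (if (decide ((m + 1 + j : ℕ) ≤ m + k) : Bool)
        then sqPerm m (m - i, m + 1 + j) else 1)
      = if j < k then Equiv.swap (m - i + j) (m - i + j + 1) else 1 := by
    intro j
    by_cases h : j < k
    · rw [if_pos (by simp; omega), if_pos h]
      unfold sqPerm
      congr 1 <;> simp <;> omega
    · rw [if_neg (by simp; omega), if_neg h]
  calc (((List.range n).map fun j =>
        if (decide ((m + 1 + j : ℕ) ≤ m + k) : Bool)
          then sqPerm m (m - i, m + 1 + j) else 1)).prod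
      = (((List.range n).map fun j =>
          if j < k then Equiv.swap (m - i + j) (m - i + j + 1) else 1)).prod := by
        congr 1; exact List.map_congr_left (fun j _ => h1 j)
    _ = swapChain (m - i) k := prod_if_lt _ n k hkn

lemma readingWord_true_eq (m n : ℕ) :
    readingWord m n (fun _ => true) = gridWord m n m := by
  unfold readingWord gridWord
  congr 1
  apply List.map_congr_left
  intro i _
  simp only [if_true]
  unfold swapChain
  congr 1
  apply List.map_congr_left
  intro j _
  unfold sqPerm
  congr 1 <;> simp <;> omega

/-- For `k ∈ {1,...,n}`, the inverse of the reading word `w_k` of all squares `(a,b)` with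
`b ≤ m+k` equals `σ_k^k`, where `σ_k` is the cycle mapping `j ↦ j+1` for `j ∈ {1,...,m+k-1}`,
`m+k ↦ 1`, and fixing everything else; in particular the reading word of the full `m × n`
grid equals `c^m` for the cycle `c` on `{1,...,m+n}`. -/
theorem readingWord_allBlack_inv_eq_cycle_pow
    (m n k : ℕ) (hm : 2 ≤ m) (hn : 2 ≤ n) (hk1 : 1 ≤ k) (hkn : k ≤ n)
    (σ : Equiv.Perm ℕ)
    (hσ1 : ∀ j, 1 ≤ j → j ≤ m + k - 1 → σ j = j + 1)
    (hσ2 : σ (m + k) = 1)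
    (hσ3 : ∀ j, j = 0 ∨ m + k < j → σ j = j)
    (c : Equiv.Perm ℕ)
    (hc1 : ∀ j, 1 ≤ j → j ≤ m + n - 1 → c j = j + 1)
    (hc2 : c (m + n) = 1)
    (hc3 : ∀ j, j = 0 ∨ m + n < j → c j = j) :
    (readingWord m n fun p => decide (p.2 ≤ m + k))⁻¹ = σ ^ k ∧
      readingWord m n (fun _ => true) = c ^ m := by
  constructor
  · rw [readingWord_le_eq m n k hkn, inv_eq_iff_mul_eq_one]
    ext x
    simp only [Equiv.Perm.mul_apply, Equiv.Perm.one_apply]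
    rcases Nat.lt_or_ge x 1 with hx | hx
    · rw [perm_pow_fix σ x (hσ3 x (Or.inl (by omega))) k,
        gridWord_apply m k hk1 m le_rfl x]
      split_ifs <;> omega
    rcases Nat.lt_or_ge (m + k) x with hx2 | hx2
    · rw [perm_pow_fix σ x (hσ3 x (Or.inr hx2)) k,
        gridWord_apply m k hk1 m le_rfl x]
      split_ifs <;> omega
    rcases Nat.lt_or_ge m x with hx3 | hx3
    · rw [cyc_pow_wrap σ (m + k) hσ1 hσ2 k x hx hx2 (by omega) (by omega),
        gridWord_apply m k hk1 m le_rfl]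
      split_ifs <;> omega
    · rw [cyc_pow_shift σ (m + k) hσ1 k x hx (by omega),
        gridWord_apply m k hk1 m le_rfl]
      split_ifs <;> omega
  · rw [readingWord_true_eq m n]
    ext x
    rw [gridWord_apply m n (by omega) m le_rfl x]
    rcases Nat.lt_or_ge x 1 with hx | hx
    · rw [perm_pow_fix c x (hc3 x (Or.inl (by omega))) m]
      split_ifs <;> omega
    rcases Nat.lt_or_ge (m + n) x with hx2 | hx2
    · rw [perm_pow_fix c x (hc3 x (Or.inr hx2)) m]
      split_ifs <;> omega
    rcases Nat.lt_or_ge n x with hx3 | hx3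
    · rw [cyc_pow_wrap c (m + n) hc1 hc2 m x hx hx2 (by omega) (by omega)]
      split_ifs <;> omega
    · rw [cyc_pow_shift c (m + n) hc1 m x hx (by omega)]
      split_ifs <;> omega
end

section
/- Let (x,y) be any square of the m×n grid and let w_{x,y} ∈ S_{m+n} be the reading word of the set of all squares (a,b) with a ≥ x and b ≤ y. Then w_{x,y}^{-1}(j) = j for every j ∈ {1,...,x-1} and w_{x,y}^{-1}(j) = j + y - m for every j ∈ {x,...,m}; consequently the image of {1,...,m} under w_{x,y}^{-1} equals {1,...,x-1} ∪ {x+y-m,...,y}. -/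
/-!
Write `k = y - m`. Row `a ≥ x` of the region contributes the staircase
`st_a = s_a s_{a+1} ⋯ s_{a+k-1}`, which sends `a + k` to `a` and fixes everything below `a`
and above `a + k`. Reading the rows
from `m` down to `x` gives `w_{x,y} = st_m st_{m-1} ⋯ st_x`. Every factor fixes `j < x`, and for
`x ≤ j ≤ m` the point `j + k` is fixed by `st_x, …, st_{j-1}`, sent to `j` by `st_j`, and `j` is
then fixed by `st_{j+1}, …, st_m`; hence `w_{x,y}(j + k) = j`.
-/

def staircase (c k : ℕ) : Equiv.Perm ℕ :=
  ((List.range k).map fun j => Equiv.swap (c + j) (c + j + 1)).prod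

lemma list_prod_apply_eq_self {l : List (Equiv.Perm ℕ)} {v : ℕ} (h : ∀ σ ∈ l, σ v = v) :
    l.prod v = v :=
  MulAction.mem_stabilizer_iff.1 <| (MulAction.stabilizer (Equiv.Perm ℕ) v).list_prod_mem
    fun σ hσ => MulAction.mem_stabilizer_iff.2 (h σ hσ)

lemma list_prod_range_eq_of_forall_ge {M : Type*} [Monoid M] {f : ℕ → M} {t N : ℕ}
    (htN : t ≤ N) (hf : ∀ i, t ≤ i → i < N → f i = 1) :
    ((List.range N).map f).prod = ((List.range t).map f).prod := by
  obtain ⟨d, rfl⟩ := Nat.exists_eq_add_of_le htN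
  rw [List.range_add, List.map_append, List.prod_append]
  refine (congrArg (_ * ·) (List.prod_eq_one ?_)).trans (mul_one _)
  simp only [List.map_map, List.mem_map, List.mem_range, Function.comp_apply]
  rintro _ ⟨i, hi, rfl⟩
  exact hf _ (Nat.le_add_right _ _) (by omega)

lemma staircase_apply_of_lt_or_lt {c k v : ℕ} (hv : v < c ∨ c + k < v) :
    staircase c k v = v := by
  refine list_prod_apply_eq_self fun σ hσ => ?_
  obtain ⟨j, hj, rfl⟩ := List.mem_map.1 hσ
  rw [List.mem_range] at hj
  exact Equiv.swap_apply_of_ne_of_ne (by omega) (by omega)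

lemma staircase_apply_add (c k : ℕ) : staircase c k (c + k) = c := by
  induction k with
  | zero => simp [staircase]
  | succ k ih =>
    simp only [staircase, List.range_succ, List.map_append, List.prod_append,
      List.map_singleton, List.prod_singleton, Equiv.Perm.mul_apply] at ih ⊢
    rw [← add_assoc, Equiv.swap_apply_right, ih]

section StaircaseProduct

variable {L : List ℕ} {k : ℕ}

lemma list_prod_staircase_apply_of_forall {v : ℕ} (hv : ∀ c ∈ L, v < c ∨ c + k < v) :
    (L.map (staircase · k)).prod v = v :=
  list_prod_apply_eq_self fun σ hσ => by
    obtain ⟨c, hc, rfl⟩ := List.mem_map.1 hσ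
    exact staircase_apply_of_lt_or_lt (hv c hc)

lemma list_prod_staircase_apply_add (hL : L.Pairwise (· > ·)) {c : ℕ} (hc : c ∈ L) :
    (L.map (staircase · k)).prod (c + k) = c := by
  induction L with
  | nil => cases hc
  | cons c' L ih =>
    rw [List.pairwise_cons] at hL
    rw [List.map_cons, List.prod_cons, Equiv.Perm.mul_apply]
    rcases List.mem_cons.1 hc with rfl | hc
    · rw [list_prod_staircase_apply_of_forall fun c'' hc'' => Or.inr (by
          have := hL.1 c'' hc''; omega),
        staircase_apply_add]
    · rw [ih hL.2 hc, staircase_apply_of_lt_or_lt (Or.inl (hL.1 c hc))]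

end StaircaseProduct

lemma wAt_eq_list_prod_staircase (m n x y : ℕ) (hx1 : 1 ≤ x) (hyn : y ≤ m + n) :
    wAt m n x y =
      (((List.range (m + 1 - x)).map (m - ·)).map (staircase · (y - m))).prod := by
  rw [List.map_map, wAt, readingWord,
    list_prod_range_eq_of_forall_ge (t := m + 1 - x) (by omega) fun i hi _ =>
      (list_prod_range_eq_of_forall_ge (t := 0) (Nat.zero_le n) fun j _ _ => by
        simp [show ¬x ≤ m - i by omega])]
  refine congrArg List.prod <| List.map_congr_left fun i hi => ?_
  rw [List.mem_range] at hi
  rw [list_prod_range_eq_of_forall_ge (t := y - m) (by omega) fun j hj _ => by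
    simp [show ¬m + 1 + j ≤ y by omega]]
  refine congrArg List.prod (List.map_congr_left fun j hj => ?_)
  rw [List.mem_range] at hj
  simp only [sqPerm, show x ≤ m - i by omega, show m + 1 + j ≤ y by omega, decide_true,
    Bool.and_self, if_true]
  congr 1 <;> omega

section

variable {m n x y : ℕ}

lemma wAt_apply_of_lt (hx1 : 1 ≤ x) (hyn : y ≤ m + n) {v : ℕ} (hv : v < x) :
    wAt m n x y v = v := by
  rw [wAt_eq_list_prod_staircase m n x y hx1 hyn]
  refine list_prod_staircase_apply_of_forall fun c hc => Or.inl ?_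
  obtain ⟨i, hi, rfl⟩ := List.mem_map.1 hc
  rw [List.mem_range] at hi
  omega

lemma wAt_apply_add (hx1 : 1 ≤ x) (hyn : y ≤ m + n) {j : ℕ} (hxj : x ≤ j) (hjm : j ≤ m) :
    wAt m n x y (j + (y - m)) = j := by
  rw [wAt_eq_list_prod_staircase m n x y hx1 hyn]
  refine list_prod_staircase_apply_add ?_
    (List.mem_map.2 ⟨m - j, List.mem_range.2 (by omega), by omega⟩)
  refine List.pairwise_map.2 <| List.pairwise_lt_range.imp_of_mem fun hi hj _ => ?_
  rw [List.mem_range] at hi hj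
  omega

end

theorem wAt_inv_apply_general (m n x y : ℕ)
    (hx1 : 1 ≤ x) (hxm : x ≤ m) (hy1 : m + 1 ≤ y) (hyn : y ≤ m + n) :
    (∀ j, 1 ≤ j → j ≤ x - 1 → (wAt m n x y)⁻¹ j = j) ∧
    (∀ j, x ≤ j → j ≤ m → (wAt m n x y)⁻¹ j = j + y - m) ∧
    Finset.image (fun j => (wAt m n x y)⁻¹ j) (Finset.Icc 1 m) =
      Finset.Icc 1 (x - 1) ∪ Finset.Icc (x + y - m) y := by
  have low (j : ℕ) (hj : j ≤ x - 1) : (wAt m n x y)⁻¹ j = j :=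
    Equiv.Perm.inv_eq_iff_eq.2 (wAt_apply_of_lt hx1 hyn (by omega)).symm
  have high (j : ℕ) (hxj : x ≤ j) (hjm : j ≤ m) : (wAt m n x y)⁻¹ j = j + y - m := by
    rw [Equiv.Perm.inv_eq_iff_eq, show j + y - m = j + (y - m) by omega,
      wAt_apply_add hx1 hyn hxj hjm]
  refine ⟨fun j _ hj => low j hj, high, ?_⟩
  ext t
  simp only [Finset.mem_image, Finset.mem_union, Finset.mem_Icc]
  constructor
  · rintro ⟨j, ⟨hj1, hjm⟩, rfl⟩
    rcases le_or_gt j (x - 1) with hj | hj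
    · exact Or.inl (by rw [low j hj]; omega)
    · exact Or.inr (by rw [high j (by omega) hjm]; omega)
  · rintro (⟨ht1, ht⟩ | ⟨ht, hty⟩)
    · exact ⟨t, ⟨ht1, by omega⟩, low t ht⟩
    · exact ⟨t + m - y, ⟨by omega, by omega⟩, by rw [high _ (by omega) (by omega)]; omega⟩

/-- For any grid square `(x,y)`, the permutation `w_{x,y}⁻¹` fixes `{1,...,x-1}`, maps
`j ↦ j + y - m` for `j ∈ {x,...,m}`, and consequently the image of `{1,...,m}` under
`w_{x,y}⁻¹` is `{1,...,x-1} ∪ {x+y-m,...,y}`. -/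
theorem wAt_inv_apply (m n x y : ℕ) (hm : 2 ≤ m) (hn : 2 ≤ n)
    (hx1 : 1 ≤ x) (hxm : x ≤ m) (hy1 : m + 1 ≤ y) (hyn : y ≤ m + n) :
    (∀ j, 1 ≤ j → j ≤ x - 1 → (wAt m n x y)⁻¹ j = j) ∧
    (∀ j, x ≤ j → j ≤ m → (wAt m n x y)⁻¹ j = j + y - m) ∧
    Finset.image (fun j => (wAt m n x y)⁻¹ j) (Finset.Icc 1 m) =
      Finset.Icc 1 (x - 1) ∪ Finset.Icc (x + y - m) y :=
  wAt_inv_apply_general m n x y hx1 hxm hy1 hyn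
end

section
/- Let C be an m×n Cauchon diagram, let (x,y) be any square of the grid, and let (x_1,y_1),...,(x_t,y_t) be the chain rooted at (x,y) (with t = 0 if the chain is empty). Then the image of {1,...,m} under the composite permutation v_{x,y} ∘ w_{x,y}^{-1} equals the set ({1,...,m} \ {x_1,...,x_t}) ∪ {y_1,...,y_t}. -/
/-!
Follow the `m`-element set `w_{x,y}⁻¹ {1, …, m} = [1, x) ∪ [x + c, y]`, `c = y - m`, through the
rows of `v_{x,y}` from the bottom up; row `a` of the region is `s_a s_{a+1} ⋯ s_{a+c-1}` with the
factors of its white squares deleted. After row `a` the set consists of `[1, a]` without the rows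
`X_i`, the point `a + Y_i - m` for each chain square with `X_i ≤ a`, and `[a + c + 1, y]`.
Row `a + 1` moves the point `a + 1 + c` down to `a + 1` and shifts the chain points up by one.
Since `s_k` fixes every set containing both or neither of `k` and `k + 1`, white squares in the
columns of earlier chain squares change nothing; by the definition of the chain, every other white
square of row `a + 1` lies in a row `X_i`, at a column `≤ Y_i`, and there the sweep stops at
`(X_i, Y_i)`: row `X_i` stays missing and a new point starts in column `Y_i`.
-/

open Finset Equiv

/-- Row `a` of a reading word, the square in column `m + 1 + j` carrying `s_{a+j}`. -/
def rowWord (a : ℕ) (ε : ℕ → Bool) (c : ℕ) : Perm ℕ :=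
  ((List.range c).map fun j => if ε j then swap (a + j) (a + j + 1) else 1).prod

section RowWord

variable {a c : ℕ} {ε : ℕ → Bool}

lemma rowWord_zero (a : ℕ) (ε : ℕ → Bool) : rowWord a ε 0 = 1 := rfl

lemma rowWord_succ (a : ℕ) (ε : ℕ → Bool) (c : ℕ) :
    rowWord a ε (c + 1) = rowWord a ε c * if ε c then swap (a + c) (a + c + 1) else 1 :=
  List.prod_range_succ _ c

lemma rowWord_apply_of_lt_or_lt {u : ℕ} (h : u < a ∨ a + c < u) : rowWord a ε c u = u := by
  induction c with
  | zero => rfl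
  | succ c ih =>
    rw [rowWord_succ, Perm.mul_apply]
    split_ifs
    · rw [swap_apply_of_ne_of_ne (by omega) (by omega), ih (by omega)]
    · rw [Perm.one_apply, ih (by omega)]

lemma rowWord_succ_apply_of_eq_false (h : ε c = false) :
    rowWord a ε (c + 1) (a + c + 1) = a + c + 1 := by
  rw [rowWord_succ, h, if_neg Bool.false_ne_true, mul_one,
    rowWord_apply_of_lt_or_lt (Or.inr (Nat.lt_succ_self _))]

lemma rowWord_eq_of_forall_eq_false {n : ℕ} (hcn : c ≤ n)
    (hε : ∀ j, c ≤ j → j < n → ε j = false) : rowWord a ε n = rowWord a ε c := by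
  induction n, hcn using Nat.le_induction with
  | base => rfl
  | succ n hcn ih =>
    rw [rowWord_succ, hε n hcn n.lt_succ_self, if_neg Bool.false_ne_true, mul_one,
      ih fun j h1 h2 => hε j h1 (by omega)]

lemma image_swap_of_mem_iff {α : Type*} [DecidableEq α] {s : Finset α} {i j : α}
    (h : i ∈ s ↔ j ∈ s) : s.image (swap i j) = s := by
  have key : ∀ v, swap i j v ∈ s ↔ v ∈ s := fun v => by
    rw [swap_apply_def]
    split_ifs with hi hj <;> simp_all
  ext u
  simp only [mem_image]
  exact ⟨fun ⟨v, hv, hvu⟩ => hvu ▸ (key v).2 hv,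
    fun hu => ⟨swap i j u, (key u).2 hu, swap_apply_self i j u⟩⟩

theorem image_rowWord_insert {c₀ : ℕ} (hc : c₀ ≤ c) {Q : Finset ℕ}
    (hQ : Q ⊆ Ico (a + c₀) (a + c)) (hε : ∀ j, c₀ ≤ j → j < c → a + j ∉ Q → ε j = true) :
    (insert (a + c) Q).image (rowWord a ε c) =
      insert (rowWord a ε c₀ (a + c₀)) (Q.image (· + 1)) := by
  induction c, hc using Nat.le_induction generalizing Q with
  | base =>
    obtain rfl : Q = ∅ := by simpa using hQ
    simp
  | succ c hc ih =>
    have hmem : a + c ∈ Q → (insert (a + c + 1) Q).image (rowWord a ε c) =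
        insert (rowWord a ε c₀ (a + c₀)) (Q.image (· + 1)) := fun hq => by
      obtain ⟨Q', hQ', rfl⟩ : ∃ Q', a + c ∉ Q' ∧ Q = insert (a + c) Q' :=
        ⟨Q.erase (a + c), notMem_erase _ _, (insert_erase hq).symm⟩
      have hQ'c : Q' ⊆ Ico (a + c₀) (a + c) := fun u hu => by
        have := hQ (mem_insert_of_mem hu)
        simp only [mem_Ico] at this ⊢
        exact ⟨this.1, lt_of_le_of_ne (by omega) (ne_of_mem_of_not_mem hu hQ')⟩
      rw [image_insert, rowWord_apply_of_lt_or_lt (Or.inr (by omega)),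
        ih hQ'c fun j h1 h2 hj => hε j h1 (by omega) (mem_insert.not.2 (not_or.2 ⟨by omega, hj⟩)),
        image_insert, insert_comm]
    rw [rowWord_succ, Perm.coe_mul, ← image_image, ← add_assoc]
    cases hεc : ε c
    · have hq : a + c ∈ Q := by
        by_contra hq
        simpa [hεc] using hε c hc c.lt_succ_self hq
      simpa using hmem hq
    · rw [if_pos rfl]
      by_cases hq : a + c ∈ Q
      · rw [image_swap_of_mem_iff (by simp [hq]), hmem hq]
      · have hc1 : a + c + 1 ∉ Q := fun h => absurd (mem_Ico.1 (hQ h)).2 (by omega)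
        rw [image_insert, swap_apply_right, image_swap_of_mem_iff (by simp [hq, hc1])]
        refine ih (fun u hu => ?_) fun j h1 h2 => hε j h1 (by omega)
        have := mem_Ico.1 (hQ hu)
        exact mem_Ico.2 ⟨this.1, lt_of_le_of_ne (by omega) (ne_of_mem_of_not_mem hu hq)⟩

end RowWord

def lowerRows (R : ℕ → Perm ℕ) : ℕ → Perm ℕ
  | 0 => 1
  | k + 1 => R (k + 1) * lowerRows R k

lemma lowerRows_eq_one {R : ℕ → Perm ℕ} {k : ℕ} (h : ∀ a, 1 ≤ a → a ≤ k → R a = 1) :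
    lowerRows R k = 1 := by
  induction k with
  | zero => rfl
  | succ k ih => rw [lowerRows, h _ (by omega) le_rfl, one_mul, ih fun a h1 h2 => h a h1 (by omega)]

lemma list_prod_range_eq_lowerRows (R : ℕ → Perm ℕ) (k : ℕ) :
    ((List.range k).map fun i => R (k - i)).prod = lowerRows R k := by
  induction k with
  | zero => rfl
  | succ k ih => simp [List.prod_range_succ', lowerRows, ← ih]

lemma readingWord_eq_lowerRows (m n : ℕ) (P : ℕ × ℕ → Bool) :
    readingWord m n P = lowerRows (fun a => rowWord a (fun j => P (a, m + 1 + j)) n) m := by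
  rw [← list_prod_range_eq_lowerRows]
  unfold readingWord rowWord sqPerm
  congr! 5 with i _
  funext j
  rw [show m - i + (m + 1 + j) - m - 1 = m - i + j by omega,
    show m - i + (m + 1 + j) - m = m - i + j + 1 by omega]

def regionRow (m : ℕ) (col : ℕ × ℕ → Bool) (x y a : ℕ) (j : ℕ) : Bool :=
  col (a, m + 1 + j) && decide (x ≤ a) && decide (m + 1 + j ≤ y)

lemma vAt_eq_lowerRows (m n : ℕ) (col : ℕ × ℕ → Bool) (x y : ℕ) :
    vAt m n col x y = lowerRows (fun a => rowWord a (regionRow m col x y a) n) m :=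
  readingWord_eq_lowerRows m n _

lemma rowWord_regionRow_of_lt {m n : ℕ} {col : ℕ × ℕ → Bool} {x y a : ℕ} (ha : a < x) :
    rowWord a (regionRow m col x y a) n = 1 :=
  rowWord_eq_of_forall_eq_false (Nat.zero_le n) fun j _ _ => by simp [regionRow]; omega

lemma rowWord_regionRow_eq {m n : ℕ} {col : ℕ × ℕ → Bool} {x y a : ℕ} (hyn : y ≤ m + n) :
    rowWord a (regionRow m col x y a) n = rowWord a (regionRow m col x y a) (y - m) :=
  rowWord_eq_of_forall_eq_false (by omega) fun j _ _ => by simp [regionRow]; omega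

/-- `Γ` is a chain of white squares of the region `x ≤ a ≤ m`, `m < b ≤ y`, going strictly
north-west, that accounts for every white square of the region: each one shares its row or its
column with a square of `Γ` weakly south-east of it. -/
structure IsWhiteChain (m : ℕ) (col : ℕ × ℕ → Bool) (x y : ℕ) (Γ : Finset (ℕ × ℕ)) : Prop where
  mem_region : ∀ p ∈ Γ, x ≤ p.1 ∧ p.1 ≤ m ∧ m < p.2 ∧ p.2 ≤ y
  col_eq_false : ∀ p ∈ Γ, col p = false
  injOn_fst : Set.InjOn Prod.fst (Γ : Set (ℕ × ℕ))
  snd_lt_of_fst_lt : ∀ p ∈ Γ, ∀ q ∈ Γ, p.1 < q.1 → q.2 < p.2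
  exists_of_col_eq_false : ∀ a b, x ≤ a → a ≤ m → m < b → b ≤ y → col (a, b) = false →
    ∃ p ∈ Γ, p.1 ≤ a ∧ b ≤ p.2 ∧ (p.1 = a ∨ p.2 = b)

def chainCols (m : ℕ) (Γ : Finset (ℕ × ℕ)) (k s : ℕ) : Finset ℕ :=
  (Γ.filter fun p => p.1 ≤ k).image fun p => p.2 + s - m

/-- The image of `w_{x,y}⁻¹ {1, …, m}` under the rows `≤ k` of `v_{x,y}`. -/
def rowsImage (m y : ℕ) (Γ : Finset (ℕ × ℕ)) (k : ℕ) : Finset ℕ :=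
  (Icc 1 k \ Γ.image Prod.fst) ∪ chainCols m Γ k k ∪ Icc (k + (y - m) + 1) y

lemma mem_chainCols {m : ℕ} {Γ : Finset (ℕ × ℕ)} {k s u : ℕ} :
    u ∈ chainCols m Γ k s ↔ ∃ p ∈ Γ, p.1 ≤ k ∧ u = p.2 + s - m := by
  simp [chainCols, and_assoc, eq_comm]

lemma chainCols_succ_of_forall_ne {m : ℕ} {Γ : Finset (ℕ × ℕ)} {k s : ℕ}
    (hk : ∀ p ∈ Γ, p.1 ≠ k + 1) : chainCols m Γ (k + 1) s = chainCols m Γ k s := by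
  unfold chainCols
  congr 1
  exact filter_congr fun p hp => by have := hk p hp; omega

namespace IsWhiteChain

variable {m : ℕ} {col : ℕ × ℕ → Bool} {x y k : ℕ} {Γ : Finset (ℕ × ℕ)}

lemma image_chainCols_add_one (hΓ : IsWhiteChain m col x y Γ) (s : ℕ) :
    (chainCols m Γ k s).image (· + 1) = chainCols m Γ k (s + 1) := by
  rw [chainCols, chainCols, image_image]
  refine image_congr fun p hp => ?_
  have := hΓ.mem_region p (mem_filter.1 hp).1
  simp only [Function.comp_apply]
  omega

lemma chainCols_succ_of_mem (hΓ : IsWhiteChain m col x y Γ) {b s : ℕ} (hb : (k + 1, b) ∈ Γ) :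
    chainCols m Γ (k + 1) s = insert (b + s - m) (chainCols m Γ k s) := by
  have hrows :
      Γ.filter (fun p => p.1 ≤ k + 1) = insert (k + 1, b) (Γ.filter fun p => p.1 ≤ k) := by
    ext p
    simp only [mem_filter, mem_insert]
    constructor
    · rintro ⟨hp, hpk⟩
      rcases Nat.lt_or_ge p.1 (k + 1) with h | h
      · exact Or.inr ⟨hp, by omega⟩
      · exact Or.inl (hΓ.injOn_fst hp hb (by simp; omega))
    · rintro (rfl | ⟨hp, hpk⟩)
      exacts [⟨hb, le_rfl⟩, ⟨hp, by omega⟩]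
  rw [chainCols, hrows, image_insert, chainCols]

lemma regionRow_eq_true (hΓ : IsWhiteChain m col x y Γ) {j : ℕ} (hxk : x ≤ k + 1)
    (hkm : k + 1 ≤ m) (hj : m + 1 + j ≤ y) (hrow : ∀ p ∈ Γ, p.1 = k + 1 → p.2 < m + 1 + j)
    (hfree : k + 1 + j ∉ chainCols m Γ k k) : regionRow m col x y (k + 1) j = true := by
  by_contra hw
  have hcol : col (k + 1, m + 1 + j) = false := by simpa [regionRow, hxk, hj] using hw
  obtain ⟨p, hp, hpa, hpb, hp'⟩ :=
    hΓ.exists_of_col_eq_false _ _ hxk hkm (by omega) hj hcol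
  rcases eq_or_ne p.1 (k + 1) with h | h
  · exact absurd (hrow p hp h) (by omega)
  · exact hfree (mem_chainCols.2 ⟨p, hp, by omega, by omega⟩)

lemma image_insert_chainCols_of_forall_ne (hΓ : IsWhiteChain m col x y Γ) (hxk : x ≤ k + 1)
    (hkm : k + 1 ≤ m) (hk : ∀ p ∈ Γ, p.1 ≠ k + 1) :
    (insert (k + 1 + (y - m)) (chainCols m Γ k k)).image
        (rowWord (k + 1) (regionRow m col x y (k + 1)) (y - m)) =
      insert (k + 1) (chainCols m Γ (k + 1) (k + 1)) := by
  have hQ : chainCols m Γ k k ⊆ Ico (k + 1 + 0) (k + 1 + (y - m)) := fun u hu => by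
    obtain ⟨p, hp, -, rfl⟩ := mem_chainCols.1 hu
    have := hΓ.mem_region p hp
    simp only [mem_Ico]
    omega
  rw [image_rowWord_insert (Nat.zero_le _) hQ fun j _ hj hfree =>
      hΓ.regionRow_eq_true hxk hkm (by omega) (fun p hp h => absurd h (hk p hp)) hfree,
    rowWord_zero, Perm.one_apply, add_zero, hΓ.image_chainCols_add_one,
    chainCols_succ_of_forall_ne hk]

lemma image_insert_chainCols_of_mem (hΓ : IsWhiteChain m col x y Γ) (hxk : x ≤ k + 1)
    (hkm : k + 1 ≤ m) {c : ℕ} (hc : (k + 1, m + 1 + c) ∈ Γ) :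
    (insert (k + 1 + (y - m)) (chainCols m Γ k k)).image
        (rowWord (k + 1) (regionRow m col x y (k + 1)) (y - m)) =
      chainCols m Γ (k + 1) (k + 1) := by
  have hcy := (hΓ.mem_region _ hc).2.2.2
  have hQ : chainCols m Γ k k ⊆ Ico (k + 1 + (c + 1)) (k + 1 + (y - m)) := fun u hu => by
    obtain ⟨p, hp, hpk, rfl⟩ := mem_chainCols.1 hu
    have := hΓ.mem_region p hp
    have := hΓ.snd_lt_of_fst_lt p hp _ hc (by simp; omega)
    simp only [mem_Ico]
    omega
  have hrow : ∀ p ∈ Γ, p.1 = k + 1 → p.2 = m + 1 + c := fun p hp h =>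
    congrArg Prod.snd (hΓ.injOn_fst hp hc h)
  have hwhite : regionRow m col x y (k + 1) c = false := by
    simp [regionRow, hΓ.col_eq_false _ hc]
  rw [image_rowWord_insert (by omega) hQ fun j hj _ hfree => hΓ.regionRow_eq_true hxk hkm
      (by omega) (fun p hp h => by rw [hrow p hp h]; omega) hfree,
    ← add_assoc, rowWord_succ_apply_of_eq_false hwhite, hΓ.image_chainCols_add_one,
    hΓ.chainCols_succ_of_mem hc]
  congr 1
  omega

lemma image_rowsImage_succ (hΓ : IsWhiteChain m col x y Γ) {n : ℕ} (hxk : x ≤ k + 1)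
    (hkm : k + 1 ≤ m) (hmy : m ≤ y) (hyn : y ≤ m + n) :
    (rowsImage m y Γ k).image (rowWord (k + 1) (regionRow m col x y (k + 1)) n) =
      rowsImage m y Γ (k + 1) := by
  set F := (Icc 1 k \ Γ.image Prod.fst) ∪ Icc (k + (y - m) + 2) y
  have hsplit : rowsImage m y Γ k = F ∪ insert (k + 1 + (y - m)) (chainCols m Γ k k) := by
    ext u
    simp only [rowsImage, F, mem_union, mem_insert, mem_Icc, mem_sdiff]
    grind
  have hF : F.image (rowWord (k + 1) (regionRow m col x y (k + 1)) (y - m)) = F :=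
    (image_congr fun u hu => rowWord_apply_of_lt_or_lt (by simp [F] at hu; omega)).trans image_id'
  rw [rowWord_regionRow_eq hyn, hsplit, image_union, hF]
  by_cases h : ∃ c, (k + 1, m + 1 + c) ∈ Γ
  · obtain ⟨c, hc⟩ := h
    have hX : k + 1 ∈ Γ.image Prod.fst := mem_image_of_mem _ hc
    rw [hΓ.image_insert_chainCols_of_mem hxk hkm hc]
    ext u
    simp only [rowsImage, F, mem_union, mem_Icc, mem_sdiff]
    grind
  · have hk : ∀ p ∈ Γ, p.1 ≠ k + 1 := fun p hp hpk => h ⟨p.2 - m - 1, by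
      have := (hΓ.mem_region p hp).2.2.1
      rw [← hpk, show m + 1 + (p.2 - m - 1) = p.2 by omega]
      exact hp⟩
    have hX : k + 1 ∉ Γ.image Prod.fst := fun hX => by
      obtain ⟨p, hp, hpk⟩ := mem_image.1 hX
      exact hk p hp hpk
    rw [hΓ.image_insert_chainCols_of_forall_ne hxk hkm hk]
    ext u
    simp only [rowsImage, F, mem_union, mem_insert, mem_Icc, mem_sdiff]
    grind

lemma rowsImage_pred (hΓ : IsWhiteChain m col x y Γ) (hx : 1 ≤ x) :
    rowsImage m y Γ (x - 1) = Ico 1 x ∪ Icc (x + (y - m)) y := by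
  have hΓx : ∀ p ∈ Γ, x ≤ p.1 := fun p hp => (hΓ.mem_region p hp).1
  ext u
  simp only [rowsImage, mem_union, mem_sdiff, mem_Icc, mem_Ico, mem_image, mem_chainCols]
  grind

lemma rowsImage_self (hΓ : IsWhiteChain m col x y Γ) (hmy : m ≤ y) :
    rowsImage m y Γ m = (Icc 1 m \ Γ.image Prod.fst) ∪ Γ.image Prod.snd := by
  have hcols : chainCols m Γ m m = Γ.image Prod.snd := by
    rw [chainCols, filter_true_of_mem fun p hp => (hΓ.mem_region p hp).2.1]
    exact image_congr fun p _ => by simp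
  rw [rowsImage, hcols, Icc_eq_empty (b := y) (by omega), union_empty]

theorem image_vAt (hΓ : IsWhiteChain m col x y Γ) {n : ℕ} (hx : 1 ≤ x) (hxm : x ≤ m + 1)
    (hmy : m ≤ y) (hyn : y ≤ m + n) :
    (Ico 1 x ∪ Icc (x + (y - m)) y).image (vAt m n col x y) =
      (Icc 1 m \ Γ.image Prod.fst) ∪ Γ.image Prod.snd := by
  have hrows : ∀ k, x - 1 ≤ k → k ≤ m → (Ico 1 x ∪ Icc (x + (y - m)) y).image
      (lowerRows (fun a => rowWord a (regionRow m col x y a) n) k) = rowsImage m y Γ k := by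
    intro k hk
    induction k, hk using Nat.le_induction with
    | base =>
      intro _
      rw [lowerRows_eq_one fun a _ ha => rowWord_regionRow_of_lt (by omega), Perm.coe_one,
        image_id, hΓ.rowsImage_pred hx]
    | succ k hk ih =>
      intro hkm
      rw [lowerRows, Perm.coe_mul, ← image_image, ih (by omega),
        hΓ.image_rowsImage_succ (by omega) hkm hmy hyn]
  rw [vAt_eq_lowerRows, hrows m (by omega) le_rfl, hΓ.rowsImage_self hmy]

end IsWhiteChain

lemma isWhiteChain_allBlack_empty (m x y : ℕ) : IsWhiteChain m (fun _ => true) x y ∅ where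
  mem_region := by simp
  col_eq_false := by simp
  injOn_fst := by simp
  snd_lt_of_fst_lt := by simp
  exists_of_col_eq_false := by simp

namespace IsChainRootedAt

variable {m n : ℕ} {col : ℕ × ℕ → Bool} {x y t : ℕ} {X Y : ℕ → ℕ}

lemma strictMonoOn (h : IsChainRootedAt m n col x y t X Y) : StrictMonoOn X (Set.Icc 1 t) := by
  obtain ⟨-, -, -, -, hstep, -⟩ := h
  exact strictMonoOn_of_lt_add_one Set.ordConnected_Icc fun i _ hi hi' =>
    (hstep i hi.1 (by simp at hi'; omega)).1

lemma strictAntiOn (h : IsChainRootedAt m n col x y t X Y) : StrictAntiOn Y (Set.Icc 1 t) := by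
  obtain ⟨-, -, -, -, hstep, -⟩ := h
  exact strictAntiOn_of_add_one_lt Set.ordConnected_Icc fun i _ hi hi' =>
    (hstep i hi.1 (by simp at hi'; omega)).2.1

lemma le_X_one_and_Y_one_le (h : IsChainRootedAt m n col x y t X Y) (ht : 1 ≤ t) :
    x ≤ X 1 ∧ Y 1 ≤ y := by
  obtain ⟨-, hwhite, hblack, -⟩ := h
  cases hcol : col (x, y)
  · obtain ⟨-, hX, hY⟩ := hwhite hcol
    omega
  · exact ⟨(hblack hcol ht).1, (hblack hcol ht).2.1⟩

lemma exists_of_col_eq_false (h : IsChainRootedAt m n col x y t X Y) (hx : 1 ≤ x)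
    (hyn : y ≤ m + n) {a b : ℕ} (hxa : x ≤ a) (ham : a ≤ m) (hmb : m < b) (hby : b ≤ y)
    (hw : col (a, b) = false) :
    ∃ i ∈ Icc 1 t, X i ≤ a ∧ b ≤ Y i ∧ (X i = a ∨ Y i = b) := by
  obtain ⟨-, hwhite, hblack, hempty, hstep, hlast⟩ := h
  have hgrid : InGrid m n (a, b) := ⟨by omega, ham, hmb, by omega⟩
  have hfirst : 1 ≤ t ∧ X 1 ≤ a ∧ b ≤ Y 1 := by
    cases hcol : col (x, y)
    · obtain ⟨ht, rfl, rfl⟩ := hwhite hcol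
      exact ⟨ht, hxa, hby⟩
    · rcases Nat.eq_zero_or_pos t with ht | ht
      · exact (hempty ht a b hgrid hw hxa hby).elim
      · exact ⟨ht, (hblack hcol ht).2.2 a b hgrid hw hxa hby⟩
  by_contra! hnone
  have hnw : ∀ k, 1 ≤ k → k ≤ t → X k < a ∧ b < Y k := by
    intro k hk
    induction k, hk using Nat.le_induction with
    | base =>
      intro _
      have := hnone 1 (by simp [hfirst.1]) hfirst.2.1 hfirst.2.2
      omega
    | succ k hk ih =>
      intro hkt
      have hle := (hstep k hk (by omega)).2.2 a b hgrid hw (ih (by omega)).1 (ih (by omega)).2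
      have := hnone (k + 1) (by simp; omega) hle.1 hle.2
      omega
  exact hlast hfirst.1 a b hgrid hw (hnw t hfirst.1 le_rfl).1 (hnw t hfirst.1 le_rfl).2

theorem isWhiteChain (h : IsChainRootedAt m n col x y t X Y) (hx : 1 ≤ x) (hyn : y ≤ m + n) :
    IsWhiteChain m col x y ((Icc 1 t).image fun i => (X i, Y i)) where
  mem_region := by
    simp only [mem_image, mem_Icc]
    rintro _ ⟨i, hi, rfl⟩
    have hgrid := (h.1 i hi.1 hi.2).1
    have hfirst := h.le_X_one_and_Y_one_le (by omega)
    have hX := h.strictMonoOn.monotoneOn (a := 1) (by simp; omega) (by simp; omega) hi.1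
    have hY := h.strictAntiOn.antitoneOn (a := 1) (by simp; omega) (by simp; omega) hi.1
    simp only [InGrid] at hgrid ⊢
    omega
  col_eq_false := by
    simp only [mem_image, mem_Icc]
    rintro _ ⟨i, hi, rfl⟩
    exact (h.1 i hi.1 hi.2).2
  injOn_fst := by
    simp only [Set.InjOn, coe_image, Set.mem_image, mem_coe, mem_Icc]
    rintro _ ⟨i, hi, rfl⟩ _ ⟨j, hj, rfl⟩ hij
    rw [h.strictMonoOn.injOn hi hj hij]
  snd_lt_of_fst_lt := by
    simp only [mem_image, mem_Icc]
    rintro _ ⟨i, hi, rfl⟩ _ ⟨j, hj, rfl⟩ hij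
    exact h.strictAntiOn hi hj ((h.strictMonoOn.lt_iff_lt hi hj).1 hij)
  exists_of_col_eq_false a b hxa ham hmb hby hw := by
    obtain ⟨i, hi, hXa, hbY, hor⟩ := h.exists_of_col_eq_false hx hyn hxa ham hmb hby hw
    exact ⟨(X i, Y i), mem_image_of_mem _ hi, hXa, hbY, hor⟩

end IsChainRootedAt

lemma vAt_allBlack (m n x y : ℕ) : vAt m n (fun _ => true) x y = wAt m n x y := rfl

theorem image_vAt_wAt_inv_eq_chain_general
    (m n : ℕ)
    (col : ℕ × ℕ → Bool)
    (x y : ℕ) (hxy : InGrid m n (x, y))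
    (t : ℕ) (X Y : ℕ → ℕ)
    (hchain : IsChainRootedAt m n col x y t X Y) :
    Finset.image (fun j => vAt m n col x y ((wAt m n x y)⁻¹ j)) (Finset.Icc 1 m) =
      (Finset.Icc 1 m \ Finset.image X (Finset.Icc 1 t)) ∪
        Finset.image Y (Finset.Icc 1 t) := by
  obtain ⟨hx, hxm, hmy, hyn⟩ := hxy
  have hw := (isWhiteChain_allBlack_empty m x y).image_vAt (n := n) hx (by omega) (by omega) hyn
  rw [vAt_allBlack, image_empty, image_empty, sdiff_empty, union_empty] at hw
  conv_lhs => rw [← hw, image_image]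
  simp only [Function.comp_def, Perm.coe_inv, symm_apply_apply]
  rw [(hchain.isWhiteChain hx hyn).image_vAt hx (by omega) (by omega) hyn, image_image, image_image]
  rfl

/-- For an `m × n` Cauchon diagram `col`, any grid square `(x,y)`, and the chain
`(X 1, Y 1), ..., (X t, Y t)` rooted at `(x,y)`, the image of `{1,...,m}` under
`v_{x,y} ∘ w_{x,y}⁻¹` is `({1,...,m} \ {X 1,...,X t}) ∪ {Y 1,...,Y t}`. -/
theorem image_vAt_wAt_inv_eq_chain
    (m n : ℕ) (hm : 2 ≤ m) (hn : 2 ≤ n)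
    (col : ℕ × ℕ → Bool) (hC : IsCauchon m n col)
    (x y : ℕ) (hxy : InGrid m n (x, y))
    (t : ℕ) (X Y : ℕ → ℕ)
    (hchain : IsChainRootedAt m n col x y t X Y) :
    Finset.image (fun j => vAt m n col x y ((wAt m n x y)⁻¹ j)) (Finset.Icc 1 m) =
      (Finset.Icc 1 m \ Finset.image X (Finset.Icc 1 t)) ∪
        Finset.image Y (Finset.Icc 1 t) :=
  image_vAt_wAt_inv_eq_chain_general m n col x y hxy t X Y hchain
end

section
/- Let C be an m×n Cauchon diagram with associated permutation v, let k ∈ {1,...,n}, and let (x_1,y_1),...,(x_t,y_t) be the chain rooted at box k on the south-east border. Then ({1,...,m} \ {x_1,...,x_t}) ∪ {y_1,...,y_t} = {1,...,m+k} \ v({1,...,k}), where v({1,...,k}) denotes the image of {1,...,k} under v. -/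
def slideF (f : ℕ → Bool) : ℕ → ℕ
  | 0 => 0
  | p + 1 => if f p then slideF f p else p + 1

def rowFnF (f : ℕ → Bool) (x : ℕ) : ℕ :=
  if f x then x + 1 else slideF f x

def blackAtF (a n : ℕ) (β : ℕ → Bool) (i : ℕ) : Bool :=
  decide (a ≤ i) && (decide (i < a + n) && β (i - a))

def rowProd (a n : ℕ) (β : ℕ → Bool) : Equiv.Perm ℕ :=
  (((List.range n).map fun j => if β j then Equiv.swap (a + j) (a + j + 1) else 1)).prod

lemma slideF_le (f : ℕ → Bool) : ∀ p, slideF f p ≤ p := by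
  intro p
  induction p with
  | zero => simp [slideF]
  | succ p ih =>
    rw [slideF]
    split
    · exact le_trans ih (by omega)
    · exact le_rfl

lemma slideF_congr {f g : ℕ → Bool} : ∀ p, (∀ i, i < p → f i = g i) → slideF f p = slideF g p := by
  intro p
  induction p with
  | zero => simp [slideF]
  | succ p ih =>
    intro h
    rw [slideF, slideF, h p (by omega), ih (fun i hi => h i (by omega))]

lemma slideF_eq_self {f : ℕ → Bool} : ∀ p, (∀ i, i < p → f i = false) → slideF f p = p := by
  intro p
  induction p with
  | zero => simp [slideF]
  | succ p ih =>
    intro h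
    rw [slideF, h p (by omega)]
    simp

lemma slideF_ge {f : ℕ → Bool} {a : ℕ} (h : ∀ i, i < a → f i = false) :
    ∀ p, a ≤ p → a ≤ slideF f p := by
  intro p
  induction p with
  | zero => omega
  | succ p ih =>
    intro hap
    rw [slideF]
    rcases Nat.lt_or_ge p a with hpa | hpa
    · rw [h p hpa]
      simp
      omega
    · split
      · exact ih hpa
      · omega

lemma rowFnF_congr {f g : ℕ → Bool} (x : ℕ) (h : ∀ i, i ≤ x → f i = g i) :
    rowFnF f x = rowFnF g x := by
  unfold rowFnF
  rw [h x le_rfl, slideF_congr x (fun i hi => h i (by omega))]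

lemma rowFnF_le (f : ℕ → Bool) (x : ℕ) : rowFnF f x ≤ x + 1 := by
  unfold rowFnF
  split
  · exact le_rfl
  · exact le_trans (slideF_le f x) (by omega)

lemma slideF_pos {f : ℕ → Bool} (hf0 : f 0 = false) : ∀ p, 1 ≤ p → 1 ≤ slideF f p := by
  intro p
  induction p with
  | zero => omega
  | succ p ih =>
    intro _
    rw [slideF]
    rcases Nat.eq_zero_or_pos p with rfl | hp
    · rw [hf0]; simp
    · split
      · exact ih hp
      · omega

lemma rowFnF_pos {f : ℕ → Bool} (hf0 : f 0 = false) {x : ℕ} (hx : 1 ≤ x) :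
    1 ≤ rowFnF f x := by
  unfold rowFnF
  split
  · omega
  · exact slideF_pos hf0 x hx

lemma rowProd_apply (a : ℕ) (β : ℕ → Bool) : ∀ (n : ℕ) (x : ℕ),
    rowProd a n β x = rowFnF (blackAtF a n β) x := by
  intro n
  induction n with
  | zero =>
    intro x
    simp only [rowProd, List.range_zero, List.map_nil, List.prod_nil, Equiv.Perm.one_apply]
    unfold rowFnF
    have hb : ∀ i, blackAtF a 0 β i = false := by
      intro i; simp [blackAtF]; omega
    rw [hb x, slideF_eq_self x (fun i _ => hb i)]
    simp
  | succ n ih =>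
    intro x
    have hsplit : rowProd a (n+1) β x
        = rowProd a n β ((if β n then Equiv.swap (a + n) (a + n + 1) else (1 : Equiv.Perm ℕ)) x) := by
      unfold rowProd
      rw [List.range_succ, List.map_append, List.prod_append, List.map_singleton,
        List.prod_singleton, Equiv.Perm.mul_apply]
    have hlow : ∀ i, i < a + n → blackAtF a (n+1) β i = blackAtF a n β i := by
      intro i hi
      simp only [blackAtF]
      have h1 : decide (i < a + n) = true := by simp; omega
      have h2 : decide (i < a + (n+1)) = true := by simp; omega
      rw [h1, h2]
    have hhiN : ∀ i, a + n ≤ i → blackAtF a n β i = false := by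
      intro i hi; simp [blackAtF]; omega
    have hhiN1 : ∀ i, a + n + 1 ≤ i → blackAtF a (n+1) β i = false := by
      intro i hi; simp [blackAtF]; omega
    -- the "far" case x > a+n+1 : both rowFnF are x
    have hfar : ∀ (g : ℕ → Bool), g x = false → g (x-1) = false → 1 ≤ x → rowFnF g x = x := by
      intro g hgx hgx1 hx1
      unfold rowFnF
      rw [hgx]
      simp only [Bool.false_eq_true, if_false]
      obtain ⟨p, rfl⟩ : ∃ p, x = p + 1 := ⟨x - 1, by omega⟩
      rw [slideF]
      simp only [Nat.add_sub_cancel] at hgx1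
      rw [hgx1]
      simp
    rw [hsplit]
    cases hβ : β n with
    | false =>
      rw [if_neg (by simp [hβ])]
      rw [Equiv.Perm.one_apply, ih x]
      refine (rowFnF_congr x ?_).symm
      intro i _
      rcases Nat.lt_or_ge i (a + n) with hi | hi
      · exact hlow i hi
      · rcases Nat.eq_or_lt_of_le hi with heq | hi'
        · rw [← heq, hhiN (a+n) le_rfl]
          simp [blackAtF, hβ]
        · rw [hhiN1 i (by omega), hhiN i (by omega)]
    | true =>
      rw [if_pos (by simp [hβ])]
      have hmid : blackAtF a (n+1) β (a + n) = true := by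
        simp [blackAtF, hβ]
      rcases eq_or_ne x (a + n) with rfl | hx1
      · rw [Equiv.swap_apply_left, ih]
        unfold rowFnF
        rw [hmid, hhiN (a+n+1) (by omega)]
        rw [if_pos rfl]
        simp only [Bool.false_eq_true, if_false]
        rw [show a+n+1 = (a+n)+1 from rfl, slideF, hhiN (a+n) le_rfl]
        simp
      · rcases eq_or_ne x (a + n + 1) with rfl | hx2
        · rw [Equiv.swap_apply_right, ih]
          unfold rowFnF
          rw [hhiN (a+n) le_rfl, hhiN1 (a+n+1) le_rfl]
          simp only [Bool.false_eq_true, if_false]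
          rw [show a+n+1 = (a+n)+1 from rfl, slideF, hmid]
          rw [if_pos rfl]
          exact slideF_congr (a+n) (fun i hi => (hlow i hi).symm)
        · rw [Equiv.swap_apply_of_ne_of_ne hx1 hx2, ih x]
          rcases Nat.lt_or_ge x (a + n) with hxl | hxg
          · refine (rowFnF_congr x ?_).symm
            intro i hi
            exact hlow i (by omega)
          · -- x ≥ a+n, x ≠ a+n, x ≠ a+n+1 ⇒ x ≥ a+n+2
            have hx2' : a + n + 2 ≤ x := by omega
            rw [hfar (blackAtF a n β) (hhiN x (by omega)) (hhiN (x-1) (by omega)) (by omega),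
              hfar (blackAtF a (n+1) β) (hhiN1 x (by omega)) (hhiN1 (x-1) (by omega)) (by omega)]


lemma readingWord_zero (n : ℕ) (P : ℕ × ℕ → Bool) : readingWord 0 n P = 1 := by
  simp [readingWord]

lemma readingWord_succ (m n : ℕ) (P : ℕ × ℕ → Bool) :
    readingWord (m+1) n P =
      rowProd (m+1) n (fun j => P (m+1, m+1+1+j)) *
        readingWord m n (fun p => P (p.1, p.2 + 1)) := by
  unfold readingWord rowProd
  rw [List.range_succ_eq_map, List.map_cons, List.prod_cons, List.map_map]
  congr 1
  · -- top row
    congr 1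
    refine List.map_congr_left ?_
    intro j _
    have h0 : m + 1 - 0 = m + 1 := rfl
    rw [h0]
    by_cases h : P (m+1, m+1+1+j) = true
    · rw [if_pos h, if_pos h]
      unfold sqPerm
      congr 1 <;> omega
    · rw [if_neg h, if_neg h]
  · -- remaining rows
    congr 1
    refine List.map_congr_left ?_
    intro i _
    simp only [Function.comp]
    congr 1
    refine List.map_congr_left ?_
    intro j _
    have h1 : m + 1 - Nat.succ i = m - i := by omega
    rw [h1]
    have h2 : P (m - i, m + 1 + j + 1) = P (m - i, m + 1 + 1 + j) := by
      congr 2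
      omega
    by_cases h : P (m - i, m + 1 + 1 + j) = true
    · rw [if_pos h, if_pos (by rw [h2]; exact h)]
      unfold sqPerm
      congr 1 <;> simp <;> omega
    · rw [if_neg h, if_neg (by rw [h2]; exact h)]

lemma readingWord_le (n : ℕ) : ∀ (m : ℕ) (P : ℕ × ℕ → Bool) (x : ℕ),
    readingWord m n P x ≤ x + m := by
  intro m
  induction m with
  | zero => intro P x; rw [readingWord_zero]; simp
  | succ m ih =>
    intro P x
    rw [readingWord_succ, Equiv.Perm.mul_apply, rowProd_apply]
    have h1 := ih (fun p => P (p.1, p.2 + 1)) x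
    have h2 := rowFnF_le (blackAtF (m+1) n (fun j => P (m+1, m+1+1+j)))
      (readingWord m n (fun p => P (p.1, p.2 + 1)) x)
    omega

lemma readingWord_pos (n : ℕ) : ∀ (m : ℕ) (P : ℕ × ℕ → Bool) (x : ℕ), 1 ≤ x →
    1 ≤ readingWord m n P x := by
  intro m
  induction m with
  | zero => intro P x hx; rw [readingWord_zero]; simpa
  | succ m ih =>
    intro P x hx
    rw [readingWord_succ, Equiv.Perm.mul_apply, rowProd_apply]
    refine rowFnF_pos ?_ (ih (fun p => P (p.1, p.2 + 1)) x hx)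
    simp [blackAtF]


theorem chain_aux : ∀ (m n : ℕ) (col : ℕ × ℕ → Bool) (k t : ℕ) (X Y : ℕ → ℕ),
    1 ≤ k → k ≤ n → IsChainRootedAt m n col 1 (m + k) t X Y →
    (Finset.Icc 1 m \ Finset.image X (Finset.Icc 1 t)) ∪ Finset.image Y (Finset.Icc 1 t)
      = Finset.Icc 1 (m + k) \
          Finset.image (fun j => readingWord m n col j) (Finset.Icc 1 k) := by
  intro m
  induction m with
  | zero =>
    intro n col k t X Y hk1 hkn hch
    obtain ⟨h1, h2, h3, h4, h5, h6⟩ := hch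
    have ht0 : t = 0 := by
      by_contra h
      have hgrid := (h1 1 le_rfl (by omega)).1
      obtain ⟨ha1, ha2, _, _⟩ := hgrid
      omega
    subst ht0
    rw [readingWord_zero]
    have he : Finset.Icc 1 0 = (∅ : Finset ℕ) := Finset.Icc_eq_empty (by omega)
    rw [he]
    simp
  | succ m ih =>
    intro n col k t X Y hk1 hkn hch
    obtain ⟨h1, h2, h3, h4, h5, h6⟩ := hch
    -- basic chain facts
    have hstep : ∀ i, 1 ≤ i → i < t → X i < X (i+1) ∧ Y (i+1) < Y i :=
      fun i hi hit => ⟨(h5 i hi hit).1, (h5 i hi hit).2.1⟩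
    have hXYlt : ∀ i j, 1 ≤ i → i < j → j ≤ t → X i < X j ∧ Y j < Y i := by
      intro i j hi hij hjt
      obtain ⟨d, rfl⟩ : ∃ d, j = i + 1 + d := ⟨j - i - 1, by omega⟩
      clear hij
      induction d with
      | zero => exact hstep i hi (by omega)
      | succ d ihd =>
        have h1' := ihd (by omega)
        have h2' := hstep (i + 1 + d) (by omega) (by omega)
        constructor
        · calc X i < X (i + 1 + d) := (h1' ).1
            _ < X (i + 1 + d + 1) := h2'.1
          -- done
        · calc Y (i + 1 + (d+1)) = Y (i + 1 + d + 1) := by ring_nf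
            _ < Y (i + 1 + d) := h2'.2
            _ < Y i := (h1').2
    have hXlt : ∀ i j, 1 ≤ i → i < j → j ≤ t → X i < X j :=
      fun i j hi hij hjt => (hXYlt i j hi hij hjt).1
    have hYlt : ∀ i j, 1 ≤ i → i < j → j ≤ t → Y j < Y i :=
      fun i j hi hij hjt => (hXYlt i j hi hij hjt).2
    have hYle : ∀ i j, 1 ≤ i → i ≤ j → j ≤ t → Y j ≤ Y i := by
      intro i j hi hij hjt
      rcases Nat.eq_or_lt_of_le hij with rfl | h
      · exact le_rfl
      · exact le_of_lt (hYlt i j hi h hjt)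
    have hG : ∀ i, 1 ≤ i → i ≤ t →
        1 ≤ X i ∧ X i ≤ m + 1 ∧ m + 2 ≤ Y i ∧ Y i ≤ m + 1 + n := by
      intro i hi hit
      have := (h1 i hi hit).1
      obtain ⟨a1, a2, a3, a4⟩ := this
      exact ⟨a1, a2, by omega, by omega⟩
    have hW : ∀ i, 1 ≤ i → i ≤ t → col (X i, Y i) = false := fun i hi hit => (h1 i hi hit).2
    have hYtop : ∀ i, 1 ≤ i → i ≤ t → Y i ≤ m + 1 + k := by
      intro i hi hit
      have h1t : 1 ≤ t := le_trans hi hit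
      have hY1 : Y 1 ≤ m + 1 + k := by
        cases hroot : col (1, m + 1 + k) with
        | false => rw [(h2 hroot).2.2]
        | true => exact (h3 hroot h1t).2.1
      exact le_trans (hYle 1 i le_rfl hi hit) hY1
    -- classification of white squares in the top row
    have hclass : ∀ c, col (m + 1, c) = false → m + 2 ≤ c → c ≤ m + 1 + k →
        (∃ i, 1 ≤ i ∧ i ≤ t ∧ c = Y i) ∨ (1 ≤ t ∧ X t = m + 1 ∧ c ≤ Y t) := by
      intro c hc hc1 hc2
      have hgrid : InGrid (m+1) n (m+1, c) := ⟨by omega, by omega, by omega, by omega⟩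
      have h1t : 1 ≤ t := by
        by_contra h
        exact h4 (by omega) (m+1) c hgrid hc (by omega) hc2
      have desc : ∀ i, 1 ≤ i → i ≤ t → (∃ j, 1 ≤ j ∧ j ≤ t ∧ c = Y j) ∨ c ≤ Y i := by
        intro i
        induction i with
        | zero => omega
        | succ i ihi =>
          intro _ hit
          rcases Nat.eq_zero_or_pos i with rfl | hi1
          · -- base : show c ≤ Y 1
            cases hroot : col (1, m + 1 + k) with
            | false =>
              right
              rw [(h2 hroot).2.2]
              exact hc2
            | true =>
              right
              exact ((h3 hroot h1t).2.2 (m+1) c hgrid hc (by omega) hc2).2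
          · rcases ihi hi1 (by omega) with hdone | hle
            · exact Or.inl hdone
            · rcases Nat.eq_or_lt_of_le hle with heq | hlt
              · exact Or.inl ⟨i, hi1, by omega, heq⟩
              · have hXi : X i < m + 1 := by
                  have := hXlt i (i+1) hi1 (by omega) hit
                  have := (hG (i+1) (by omega) hit).2.1
                  omega
                right
                exact ((h5 i hi1 (by omega)).2.2 (m+1) c hgrid hc hXi hlt).2
      rcases desc t h1t le_rfl with hdone | hle
      · exact Or.inl hdone
      · rcases Nat.eq_or_lt_of_le hle with heq | hlt
        · exact Or.inl ⟨t, h1t, le_rfl, heq⟩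
        · by_cases hXt : X t = m + 1
          · exact Or.inr ⟨h1t, hXt, hle⟩
          · exfalso
            have : X t < m + 1 := by
              have := (hG t h1t le_rfl).2.1
              omega
            exact h6 h1t (m+1) c hgrid hc this hlt
    -- the smaller diagram
    set col' : ℕ × ℕ → Bool := fun p => col (p.1, p.2 + 1) with hcol'
    set t' : ℕ := if 1 ≤ t ∧ X t = m + 1 then t - 1 else t with ht'
    have ht'le : t' ≤ t := by rw [ht']; split <;> omega
    have ht'cover : ∀ i, 1 ≤ i → i ≤ t → i ≤ t' ∨ (i = t ∧ X t = m + 1) := by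
      intro i hi hit
      rw [ht']
      split
      · rename_i h
        rcases Nat.eq_or_lt_of_le hit with rfl | h'
        · exact Or.inr ⟨rfl, h.2⟩
        · exact Or.inl (by omega)
      · exact Or.inl hit
    have hXt' : ∀ i, 1 ≤ i → i ≤ t' → X i ≤ m := by
      intro i hi hit'
      have hit : i ≤ t := le_trans hit' ht'le
      have hXi : X i ≤ m + 1 := (hG i hi hit).2.1
      rcases Nat.eq_or_lt_of_le hXi with heq | h
      · exfalso
        rw [ht'] at hit'
        by_cases hc : 1 ≤ t ∧ X t = m + 1
        · rw [if_pos hc] at hit'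
          have : i < t := by omega
          have := hXlt i t hi this le_rfl
          omega
        · rw [if_neg hc] at hit'
          rcases Nat.eq_or_lt_of_le hit with rfl | hlt
          · exact hc ⟨hi, heq⟩
          · have := hXlt i t hi hlt le_rfl
            have := (hG t (by omega) le_rfl).2.1
            omega
      · omega
    -- the key equation
    have key : Finset.image (fun j => readingWord m n col' j) (Finset.Icc 1 k)
        = Finset.Icc 1 (m + k) \
            ((Finset.Icc 1 m \ Finset.image X (Finset.Icc 1 t')) ∪
              Finset.image (fun i => Y i - 1) (Finset.Icc 1 t')) := by
      have hvsub' : Finset.image (fun j => readingWord m n col' j) (Finset.Icc 1 k)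
          ⊆ Finset.Icc 1 (m + k) := by
        intro p hp
        rw [Finset.mem_image] at hp
        obtain ⟨j, hj, rfl⟩ := hp
        rw [Finset.mem_Icc] at hj ⊢
        exact ⟨readingWord_pos n m col' j hj.1,
          le_trans (readingWord_le n m col' j) (by omega)⟩
      rcases Nat.eq_zero_or_pos m with rfl | hm1
      · -- m = 0 : the small reading word is the identity and t' = 0
        have ht1 : t ≤ 1 := by
          by_contra h
          have := hXlt 1 2 le_rfl (by omega) (by omega)
          have g1 := (hG 1 le_rfl (by omega)).1
          have g2 := (hG 2 (by omega) (by omega)).2.1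
          have g3 := (hG 1 le_rfl (by omega)).2.1
          omega
        have ht'0 : t' = 0 := by
          rw [ht']
          by_cases hc : 1 ≤ t ∧ X t = 0 + 1
          · rw [if_pos hc]; omega
          · rw [if_neg hc]
            rcases Nat.eq_zero_or_pos t with h0 | h1
            · exact h0
            · exfalso
              refine hc ⟨h1, ?_⟩
              have := (hG t h1 le_rfl).1
              have := (hG t h1 le_rfl).2.1
              omega
        rw [ht'0, readingWord_zero]
        have he : Finset.Icc 1 0 = (∅ : Finset ℕ) := Finset.Icc_eq_empty (by omega)
        rw [he]
        simp
      · -- m ≥ 1 : apply the induction hypothesis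
        have hch' : IsChainRootedAt m n col' 1 (m + k) t' X (fun i => Y i - 1) := by
          have hsmallgrid : ∀ i, 1 ≤ i → i ≤ t' → InGrid m n (X i, Y i - 1) := by
            intro i hi hit'
            have hit : i ≤ t := le_trans hit' ht'le
            obtain ⟨g1, g2, g3, g4⟩ := hG i hi hit
            exact ⟨g1, hXt' i hi hit', by omega, by omega⟩
          refine ⟨?_, ?_, ?_, ?_, ?_, ?_⟩
          · intro i hi hit'
            have hit : i ≤ t := le_trans hit' ht'le
            refine ⟨hsmallgrid i hi hit', ?_⟩
            show col (X i, Y i - 1 + 1) = false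
            have : Y i - 1 + 1 = Y i := by
              have := (hG i hi hit).2.2.1
              omega
            rw [this]
            exact hW i hi hit
          · intro hroot
            have hroot' : col (1, m + 1 + k) = false := by
              have : m + k + 1 = m + 1 + k := by omega
              rw [← this]
              exact hroot
            obtain ⟨c1, c2, c3⟩ := h2 hroot'
            refine ⟨?_, c2, by show Y 1 - 1 = m + k; omega⟩
            rw [ht']
            by_cases hc : 1 ≤ t ∧ X t = m + 1
            · rw [if_pos hc]
              rcases Nat.eq_or_lt_of_le c1 with heq | h
              · exfalso
                rw [← heq] at hc
                omega
              · omega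
            · rw [if_neg hc]; exact c1
          · intro hroot h1t'
            have h1t : 1 ≤ t := le_trans h1t' ht'le
            have hroot' : col (1, m + 1 + k) = true := by
              have : m + k + 1 = m + 1 + k := by omega
              rw [← this]
              exact hroot
            obtain ⟨c1, c2, c3⟩ := h3 hroot' h1t
            refine ⟨c1, by show Y 1 - 1 ≤ m + k; omega, ?_⟩
            intro a b hgr hwhite ha hb
            have hgr' : InGrid (m+1) n (a, b+1) := by
              obtain ⟨g1, g2, g3, g4⟩ := hgr
              exact ⟨g1, by omega, by omega, by omega⟩
            have := c3 a (b+1) hgr' hwhite ha (by omega)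
            exact ⟨this.1, by show b ≤ Y 1 - 1; omega⟩
          · intro ht'0 a b hgr hwhite ha hb
            have hgr' : InGrid (m+1) n (a, b+1) := by
              obtain ⟨g1, g2, g3, g4⟩ := hgr
              exact ⟨g1, by omega, by omega, by omega⟩
            rw [ht'] at ht'0
            by_cases hc : 1 ≤ t ∧ X t = m + 1
            · rw [if_pos hc] at ht'0
              have htone : t = 1 := by omega
              -- root must be black, else X 1 = 1 = m+1 gives m = 0
              cases hroot : col (1, m + 1 + k) with
              | false =>
                obtain ⟨c1, c2, c3⟩ := h2 hroot
                rw [htone] at hc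
                omega
              | true =>
                obtain ⟨c1, c2, c3⟩ := h3 hroot hc.1
                have := (c3 a (b+1) hgr' hwhite ha (by omega)).1
                rw [htone] at hc
                obtain ⟨g1, g2, g3, g4⟩ := hgr
                omega
            · rw [if_neg hc] at ht'0
              exact h4 ht'0 a (b+1) hgr' hwhite ha (by omega)
          · intro i hi hit'
            have hit : i < t := by omega
            obtain ⟨c1, c2, c3⟩ := h5 i hi hit
            have hY1 : m + 2 ≤ Y (i+1) := (hG (i+1) (by omega) hit).2.2.1
            refine ⟨c1, by show Y (i+1) - 1 < Y i - 1; have := (hG i hi (by omega)).2.2.1; omega, ?_⟩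
            intro a b hgr hwhite ha hb
            have hb' : b < Y i - 1 := hb
            have hgr' : InGrid (m+1) n (a, b+1) := by
              obtain ⟨g1, g2, g3, g4⟩ := hgr
              exact ⟨g1, by omega, by omega, by omega⟩
            have hYi : m + 2 ≤ Y i := (hG i hi (by omega)).2.2.1
            have := c3 a (b+1) hgr' hwhite ha (by omega)
            exact ⟨this.1, by show b ≤ Y (i+1) - 1; omega⟩
          · intro h1t' a b hgr hwhite ha hb
            have hb' : b < Y t' - 1 := hb
            clear hb
            have h1t : 1 ≤ t := le_trans h1t' ht'le
            have hgr' : InGrid (m+1) n (a, b+1) := by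
              obtain ⟨g1, g2, g3, g4⟩ := hgr
              exact ⟨g1, by omega, by omega, by omega⟩
            have hYt' : m + 2 ≤ Y t' := (hG t' h1t' ht'le).2.2.1
            rw [ht'] at ha hb' hYt' h1t'
            by_cases hc : 1 ≤ t ∧ X t = m + 1
            · rw [if_pos hc] at ha hb' hYt' h1t'
              have hlt : t - 1 < t := by omega
              obtain ⟨c1, c2, c3⟩ := h5 (t-1) h1t' hlt
              have : t - 1 + 1 = t := by omega
              rw [this] at c1 c2 c3
              have := (c3 a (b+1) hgr' hwhite ha (by omega)).1
              obtain ⟨g1, g2, g3, g4⟩ := hgr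
              omega
            · rw [if_neg hc] at ha hb' hYt' h1t'
              exact h6 h1t a (b+1) hgr' hwhite ha (by omega)
        have := ih n col' k t' X (fun i => Y i - 1) hk1 hkn hch'
        rw [this, Finset.sdiff_sdiff_self_left]
        exact (Finset.inter_eq_right.mpr hvsub').symm

    -- the top-row function
    set β : ℕ → Bool := fun j => col (m+1, m+1+1+j) with hβdef
    set f : ℕ → Bool := blackAtF (m+1) n β with hfdef
    have hv : ∀ x, readingWord (m+1) n col x = rowFnF f (readingWord m n col' x) := by
      intro x
      rw [readingWord_succ, Equiv.Perm.mul_apply, rowProd_apply]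
    have hf0 : ∀ i, i < m + 1 → f i = false := by
      intro i hi; simp [hfdef, blackAtF]; omega
    have hfmid : ∀ i, m + 1 ≤ i → i < m + 1 + n → f i = col (m+1, i+1) := by
      intro i hi1 hi2
      have harg : m + 1 + 1 + (i - (m+1)) = i + 1 := by omega
      simp only [hfdef, blackAtF, hβdef, harg]
      have d1 : decide (m+1 ≤ i) = true := by simpa
      have d2 : decide (i < m+1+n) = true := by simpa
      rw [d1, d2]
      simp
    -- the main claim about tokens
    have claim : ∀ j, 1 ≤ j → j ≤ k →
        (readingWord (m+1) n col j ≤ m + 1 →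
          readingWord (m+1) n col j ∈ Finset.image X (Finset.Icc 1 t)) ∧
        (∀ i, 1 ≤ i → i ≤ t → readingWord (m+1) n col j ≠ Y i) := by
      intro j hj1 hjk
      have hpmem : readingWord m n col' j ∈ Finset.Icc 1 (m + k) \
          ((Finset.Icc 1 m \ Finset.image X (Finset.Icc 1 t')) ∪
            Finset.image (fun i => Y i - 1) (Finset.Icc 1 t')) := by
        rw [← key]
        exact Finset.mem_image_of_mem _ (Finset.mem_Icc.mpr ⟨hj1, hjk⟩)
      set p := readingWord m n col' j with hpdef
      rw [Finset.mem_sdiff, Finset.mem_Icc] at hpmem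
      obtain ⟨⟨hp1, hp2⟩, hpA⟩ := hpmem
      rw [Finset.mem_union, not_or] at hpA
      obtain ⟨hpX, hpY⟩ := hpA
      have hpY' : ∀ i, 1 ≤ i → i ≤ t' → p ≠ Y i - 1 := by
        intro i hi hit' heq
        exact hpY (Finset.mem_image.mpr ⟨i, Finset.mem_Icc.mpr ⟨hi, hit'⟩, heq.symm⟩)
      have hvj : readingWord (m+1) n col j = rowFnF f p := hv j
      rcases Nat.lt_or_ge p (m + 1) with hpm | hpm
      · -- p is a frozen chain row
        have hpX' : ∃ i, 1 ≤ i ∧ i ≤ t' ∧ X i = p := by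
          rw [Finset.mem_sdiff, Finset.mem_Icc, not_and, not_not] at hpX
          have := hpX ⟨hp1, by omega⟩
          rw [Finset.mem_image] at this
          obtain ⟨i, hi, hXi⟩ := this
          rw [Finset.mem_Icc] at hi
          exact ⟨i, hi.1, hi.2, hXi⟩
        obtain ⟨i, hi1, hit', hXi⟩ := hpX'
        have hfix : rowFnF f p = p := by
          unfold rowFnF
          rw [hf0 p hpm]
          simp only [Bool.false_eq_true, if_false]
          exact slideF_eq_self p (fun i hi => hf0 i (by omega))
        rw [hvj, hfix]
        constructor
        · intro _
          exact Finset.mem_image.mpr ⟨i, Finset.mem_Icc.mpr ⟨hi1, le_trans hit' ht'le⟩, hXi⟩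
        · intro i' hi'1 hi't heq
          have := (hG i' hi'1 hi't).2.2.1
          omega
      · -- p is an alive token position, in the top row range
        cases hfp : f p with
        | true =>
          have hvj' : readingWord (m+1) n col j = p + 1 := by
            rw [hvj]
            unfold rowFnF
            rw [hfp]
            simp
          rw [hvj']
          constructor
          · intro h; omega
          · intro i hi1 hit heq
            have hYi2 : m + 2 ≤ Y i := (hG i hi1 hit).2.2.1
            rcases ht'cover i hi1 hit with hi' | ⟨rfl, hXtm⟩
            · exact hpY' i hi1 hi' (by omega)
            · -- i = t, X t = m+1 : top chain square is white but f p = true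
              have hw := hW i hi1 le_rfl
              rw [hXtm] at hw
              have hcolp : f p = col (m+1, p+1) := hfmid p hpm (by omega)
              rw [hfp, heq, hw] at hcolp
              exact Bool.noConfusion hcolp
        | false =>
          have hvj' : readingWord (m+1) n col j = slideF f p := by
            rw [hvj]
            unfold rowFnF
            rw [hfp]
            simp
          have hqp : slideF f p ≤ p := slideF_le f p
          have hqm : m + 1 ≤ slideF f p := slideF_ge hf0 p hpm
          have hwhite : col (m+1, p+1) = false := by
            have := hfmid p hpm (by omega)
            rw [hfp] at this
            exact this.symm
          have hcls := hclass (p+1) hwhite (by omega) (by omega)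
          have hcore : 1 ≤ t ∧ X t = m + 1 ∧ p + 1 ≤ Y t := by
            rcases hcls with ⟨i, hi1, hit, hci⟩ | hr
            · rcases ht'cover i hi1 hit with hi' | ⟨rfl, hXtm⟩
              · exfalso
                have hYi2 : m + 2 ≤ Y i := (hG i hi1 (le_trans hi' ht'le)).2.2.1
                exact hpY' i hi1 hi' (by omega)
              · exact ⟨hi1, hXtm, by omega⟩
            · exact hr
          obtain ⟨h1t, hXtm, hpYt⟩ := hcore
          rw [hvj']
          constructor
          · intro hle
            refine Finset.mem_image.mpr ⟨t, Finset.mem_Icc.mpr ⟨h1t, le_rfl⟩, ?_⟩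
            omega
          · intro i hi1 hit heq
            have hYti : Y t ≤ Y i := hYle i t hi1 hit le_rfl
            omega

    -- assembly
    have hsub : (Finset.Icc 1 (m+1) \ Finset.image X (Finset.Icc 1 t)) ∪ Finset.image Y (Finset.Icc 1 t)
        ⊆ Finset.Icc 1 (m+1+k) \
            Finset.image (fun j => readingWord (m+1) n col j) (Finset.Icc 1 k) := by
      intro a ha
      rw [Finset.mem_union] at ha
      rw [Finset.mem_sdiff]
      constructor
      · rw [Finset.mem_Icc]
        rcases ha with h | h
        · rw [Finset.mem_sdiff, Finset.mem_Icc] at h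
          omega
        · rw [Finset.mem_image] at h
          obtain ⟨i, hi, rfl⟩ := h
          rw [Finset.mem_Icc] at hi
          have g1 := hG i hi.1 hi.2
          have g2 := hYtop i hi.1 hi.2
          omega
      · intro hmem
        rw [Finset.mem_image] at hmem
        obtain ⟨j, hj, hvja⟩ := hmem
        rw [Finset.mem_Icc] at hj
        have hc := claim j hj.1 hj.2
        rcases ha with h | h
        · rw [Finset.mem_sdiff, Finset.mem_Icc] at h
          have hmem' := hc.1 (by rw [hvja]; omega)
          rw [hvja] at hmem'
          exact h.2 hmem'
        · rw [Finset.mem_image] at h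
          obtain ⟨i, hi, rfl⟩ := h
          rw [Finset.mem_Icc] at hi
          exact hc.2 i hi.1 hi.2 hvja
    have hXinj : Set.InjOn X (Finset.Icc 1 t) := by
      intro i hi j hj heq
      rw [Finset.coe_Icc, Set.mem_Icc] at hi hj
      by_contra hne
      rcases Nat.lt_or_ge i j with h | h
      · have := hXlt i j hi.1 h hj.2; omega
      · have := hXlt j i hj.1 (by omega) hi.2; omega
    have hYinj : Set.InjOn Y (Finset.Icc 1 t) := by
      intro i hi j hj heq
      rw [Finset.coe_Icc, Set.mem_Icc] at hi hj
      by_contra hne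
      rcases Nat.lt_or_ge i j with h | h
      · have := hYlt i j hi.1 h hj.2; omega
      · have := hYlt j i hj.1 (by omega) hi.2; omega
    have himX : Finset.image X (Finset.Icc 1 t) ⊆ Finset.Icc 1 (m+1) := by
      intro a ha
      rw [Finset.mem_image] at ha
      obtain ⟨i, hi, rfl⟩ := ha
      rw [Finset.mem_Icc] at hi
      have := hG i hi.1 hi.2
      rw [Finset.mem_Icc]
      omega
    have himv : Finset.image (fun j => readingWord (m+1) n col j) (Finset.Icc 1 k)
        ⊆ Finset.Icc 1 (m+1+k) := by
      intro a ha
      rw [Finset.mem_image] at ha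
      obtain ⟨j, hj, rfl⟩ := ha
      rw [Finset.mem_Icc] at hj
      rw [Finset.mem_Icc]
      exact ⟨readingWord_pos n (m+1) col j hj.1,
        le_trans (readingWord_le n (m+1) col j) (by omega)⟩
    have hdisj : Disjoint (Finset.Icc 1 (m+1) \ Finset.image X (Finset.Icc 1 t))
        (Finset.image Y (Finset.Icc 1 t)) := by
      rw [Finset.disjoint_left]
      intro a ha hb
      rw [Finset.mem_sdiff, Finset.mem_Icc] at ha
      rw [Finset.mem_image] at hb
      obtain ⟨i, hi, rfl⟩ := hb
      rw [Finset.mem_Icc] at hi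
      have := hG i hi.1 hi.2
      omega
    have hcardB : (Finset.Icc 1 (m+1+k) \
        Finset.image (fun j => readingWord (m+1) n col j) (Finset.Icc 1 k)).card = m + 1 := by
      rw [Finset.card_sdiff_of_subset himv,
        Finset.card_image_of_injective _ (Equiv.injective (readingWord (m+1) n col)),
        Nat.card_Icc, Nat.card_Icc]
      omega
    have htle : t ≤ m + 1 := by
      have h1 := Finset.card_le_card himX
      rw [Finset.card_image_of_injOn hXinj, Nat.card_Icc, Nat.card_Icc] at h1
      omega
    have hcardA : ((Finset.Icc 1 (m+1) \ Finset.image X (Finset.Icc 1 t)) ∪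
        Finset.image Y (Finset.Icc 1 t)).card = m + 1 := by
      rw [Finset.card_union_of_disjoint hdisj, Finset.card_sdiff_of_subset himX,
        Finset.card_image_of_injOn hXinj, Finset.card_image_of_injOn hYinj,
        Nat.card_Icc, Nat.card_Icc]
      omega
    exact Finset.eq_of_subset_of_card_le hsub (by omega)


/-- Let `col` be an `m × n` Cauchon diagram with associated permutation `v`, let
`k ∈ {1,...,n}`, and let `(X 1, Y 1),...,(X t, Y t)` be the chain rooted at box `k` on the
south-east border.  Then
`({1,...,m} \ {X 1,...,X t}) ∪ {Y 1,...,Y t} = {1,...,m+k} \ v({1,...,k})`. -/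
theorem chain_at_boxSE_eq_complement_low
    (m n : ℕ) (hm : 2 ≤ m) (hn : 2 ≤ n)
    (col : ℕ × ℕ → Bool) (hC : IsCauchon m n col)
    (k : ℕ) (hk1 : 1 ≤ k) (hkn : k ≤ n)
    (t : ℕ) (X Y : ℕ → ℕ)
    (hchain : IsChainRootedAt m n col (boxSE m n k).1 (boxSE m n k).2 t X Y) :
    (Finset.Icc 1 m \ Finset.image X (Finset.Icc 1 t)) ∪
        Finset.image Y (Finset.Icc 1 t) =
      Finset.Icc 1 (m + k) \
        Finset.image (fun j => assocPerm m n col j) (Finset.Icc 1 k) := by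
  have hbox : boxSE m n k = (1, m + k) := by
    simp [boxSE, hkn]
  rw [hbox] at hchain
  exact chain_aux m n col k t X Y hk1 hkn hchain
end

section
/- Let C be an m×n Cauchon diagram with associated permutation v, let k ∈ {n+1,...,m+n-1}, put I_k = v({1,...,k}) (the image of {1,...,k} under v), and let (x_1,y_1),...,(x_t,y_t) be the chain rooted at box k on the south-east border. Then {1,...,k-n} ⊆ p_1(I_k), {x_1,...,x_t} = p_1(I_k) \ {1,...,k-n}, and {y_1,...,y_t} = {m+1,...,m+n} \ p_2(I_k). -/
/-!
Write `v_x` for the reading word of the black squares in rows `x, …, m`, so that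
`v_x = v_{x+1} w_x` with `w_x` the word of row `x`. By downward induction on `x`, for every box
`(r, c)` of label `k` on the south-east border of rows `x, …, m`, with chain `(X i, Y i)`,
`v_x([x, k]) = [x, r) ∪ {X i} ∪ ([m+1, c] \ {Y i})`.

If the box lies above row `x`, then `w_x` fixes `[x, k]` and `v_{x+1}` fixes `x`. If it lies in
row `x`, then `w_x` maps `[x, k]` onto `[x, k+1]` minus the start `δ` of the black run of row `x`
ending at the box. When the run fills the row, the chain is the one rooted a row higher.
Otherwise the run starts right of a white square `(x, c')`, which is the first member of the
chain. By the Cauchon condition the columns of the run are black all the way up, so the labels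
above `δ` travel straight up to them, and the labels below `δ` are handled by the box
`(x+1, c'-1)`, where the rest of the chain is rooted.
-/

namespace CauchonDiagram

open Finset Equiv

/-- `s_x^{e 0} s_{x+1}^{e 1} ⋯ s_{x+j-1}^{e (j-1)}`: the word of a row whose `i`-th square
carries `s_{x+i}` and has colour `e i`. -/
def swapWord (x : ℕ) (e : ℕ → Bool) : ℕ → Perm ℕ
  | 0 => 1
  | j + 1 => swapWord x e j * if e j then swap (x + j) (x + j + 1) else 1

section swapWord

variable (x : ℕ) (e : ℕ → Bool)

lemma swapWord_succ_apply_of_lt {j u : ℕ} (hu : u < x + j) :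
    swapWord x e (j + 1) u = swapWord x e j u := by
  simp only [swapWord, Perm.mul_apply]
  split
  · rw [swap_apply_of_ne_of_ne (by omega) (by omega)]
  · rfl

lemma swapWord_apply_of_lt_or_gt {j u : ℕ} (hu : u < x ∨ x + j < u) :
    swapWord x e j u = u := by
  induction j with
  | zero => rfl
  | succ j ih =>
    simp only [swapWord, Perm.mul_apply]
    split
    · rw [swap_apply_of_ne_of_ne (by omega) (by omega), ih (by omega)]
    · exact ih (by omega)

lemma swapWord_mem_Icc {j v : ℕ} (hv : v ∈ Icc x (x + j)) :
    swapWord x e j v ∈ Icc x (x + j) := by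
  induction j generalizing v with
  | zero => simpa [swapWord] using hv
  | succ j ih =>
    have hstep : ∀ w, x ≤ w → w ≤ x + j + 1 → swapWord x e j w ∈ Icc x (x + (j + 1)) := by
      intro w hw1 hw2
      rcases hw2.lt_or_eq with hw2 | rfl
      · exact Icc_subset_Icc le_rfl (by omega) (ih (mem_Icc.mpr ⟨hw1, by omega⟩))
      · rw [swapWord_apply_of_lt_or_gt x e (by omega), mem_Icc]; omega
    rw [mem_Icc] at hv
    simp only [swapWord, Perm.mul_apply]
    split
    · apply hstep <;> rw [swap_apply_def] <;> split_ifs <;> omega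
    · apply hstep <;> rw [Perm.one_apply] <;> omega

lemma image_swapWord_Icc {j k : ℕ} (hk : x + j ≤ k) :
    (Icc x k).image (swapWord x e j) = Icc x k := by
  refine eq_of_subset_of_card_le (fun w hw => ?_) (card_image_of_injective _ (Equiv.injective _)).ge
  obtain ⟨v, hv, rfl⟩ := mem_image.mp hw
  rw [mem_Icc] at hv ⊢
  by_cases hvj : v ≤ x + j
  · have := mem_Icc.mp (swapWord_mem_Icc x e (v := v) (mem_Icc.mpr ⟨hv.1, hvj⟩)); omega
  · rw [swapWord_apply_of_lt_or_gt x e (by omega)]; exact hv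

lemma swapWord_apply_of_lt {j n v : ℕ} (hj : j ≤ n) (hv : v < x + j) :
    swapWord x e n v = swapWord x e j v := by
  induction n, hj using Nat.le_induction with
  | base => rfl
  | succ n hjn ih => rw [swapWord_succ_apply_of_lt x e (by omega), ih]

lemma image_swapWord_Ico {j n : ℕ} (hj : j ≤ n) :
    (Ico x (x + j)).image (swapWord x e n) = (Icc x (x + j)).erase (swapWord x e j (x + j)) := by
  rw [image_congr (g := swapWord x e j) fun v hv => swapWord_apply_of_lt x e hj (mem_Ico.mp hv).2,
    ← Icc_erase_right, image_erase (Equiv.injective _), image_swapWord_Icc x e le_rfl]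

lemma swapWord_apply_of_black {i n : ℕ} (hi : i < n) (he : e i = true) :
    swapWord x e n (x + i) = x + i + 1 := by
  rw [swapWord_apply_of_lt x e hi (by omega)]
  simp only [swapWord, he, if_true, Perm.mul_apply, swap_apply_left]
  exact swapWord_apply_of_lt_or_gt x e (by omega)

lemma swapWord_succ_apply_self (j : ℕ) :
    swapWord x e (j + 1) (x + (j + 1)) = if e j then swapWord x e j (x + j) else x + (j + 1) := by
  simp only [swapWord, Perm.mul_apply]
  split
  · rw [show x + (j + 1) = x + j + 1 by omega, swap_apply_right]
  · rw [Perm.one_apply]; exact swapWord_apply_of_lt_or_gt x e (by omega)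

lemma black_of_swapWord_apply_self_le {j i : ℕ} (hi : i < j) (h : swapWord x e j (x + j) ≤ x + i) :
    e i = true := by
  induction j with
  | zero => omega
  | succ j ih =>
    rw [swapWord_succ_apply_self] at h
    split at h
    · rcases Nat.lt_succ_iff_lt_or_eq.mp hi with hi | rfl
      · exact ih hi h
      · assumption
    · omega

lemma white_of_lt_swapWord_apply_self {j : ℕ} (h : x < swapWord x e j (x + j)) :
    e (swapWord x e j (x + j) - x - 1) = false := by
  induction j with
  | zero => simp [swapWord] at h
  | succ j ih =>
    rw [swapWord_succ_apply_self] at h ⊢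
    split at h
    · rw [if_pos ‹_›]; exact ih h
    · rw [if_neg ‹_›, show x + (j + 1) - x - 1 = j by omega]; exact Bool.eq_false_iff.mpr ‹_›

end swapWord

def rowColour (m : ℕ) (col : ℕ × ℕ → Bool) (a : ℕ) : ℕ → Bool :=
  fun j => col (a, m + 1 + j)

/-- `vAt m n col x (m + n)`, written row by row. -/
def upperWord (m n : ℕ) (col : ℕ × ℕ → Bool) (x : ℕ) : Perm ℕ :=
  ((List.range (m + 1 - x)).map fun i => swapWord (m - i) (rowColour m col (m - i)) n).prod

section upperWord

variable (m n : ℕ) (col : ℕ × ℕ → Bool)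

lemma rowWord_eq_swapWord (a : ℕ) :
    ((List.range n).map fun j => if col (a, m + 1 + j) then sqPerm m (a, m + 1 + j) else 1).prod =
      swapWord a (rowColour m col a) n := by
  induction n with
  | zero => rfl
  | succ n ih =>
    rw [List.range_succ, List.map_append, List.prod_append, ih, List.map_singleton,
      List.prod_singleton, swapWord, rowColour, sqPerm]
    congr 3 <;> omega

lemma assocPerm_eq_upperWord_one : assocPerm m n col = upperWord m n col 1 := by
  simp only [assocPerm, readingWord, upperWord, rowWord_eq_swapWord, Nat.add_sub_cancel]

lemma upperWord_eq_mul {x : ℕ} (hx : x ≤ m) :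
    upperWord m n col x = upperWord m n col (x + 1) * swapWord x (rowColour m col x) n := by
  rw [upperWord, show m + 1 - x = m + 1 - (x + 1) + 1 by omega, List.range_succ, List.map_append,
    List.prod_append, List.map_singleton, List.prod_singleton,
    show m - (m + 1 - (x + 1)) = x by omega, upperWord]

lemma upperWord_succ_self : upperWord m n col (m + 1) = 1 := by
  simp [upperWord]

lemma upperWord_apply_of_lt {x u : ℕ} (hu : u < x) : upperWord m n col x u = u := by
  refine List.prod_induction (fun g : Perm ℕ => g u = u) (fun g h hg hh => by simp [hg, hh]) rfl ?_
  simp only [List.mem_map, List.mem_range]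
  rintro _ ⟨i, hi, rfl⟩
  exact swapWord_apply_of_lt_or_gt _ _ (by omega)

lemma upperWord_apply_of_column_black {x b : ℕ} (hx : x ≤ m + 1) (hb : m + 1 ≤ b) (hbn : b ≤ m + n)
    (hcol : ∀ a, x ≤ a → a ≤ m → col (a, b) = true) :
    upperWord m n col x (x + b - m - 1) = b := by
  induction hx using Nat.decreasingInduction with
  | self => rw [upperWord_succ_self, Perm.one_apply]; omega
  | of_succ x hx ih =>
    have hblack : rowColour m col x (b - m - 1) = true := by
      rw [rowColour, show m + 1 + (b - m - 1) = b by omega]; exact hcol x le_rfl (by omega)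
    rw [upperWord_eq_mul m n col (by omega), Perm.mul_apply,
      show x + b - m - 1 = x + (b - m - 1) by omega, swapWord_apply_of_black _ _ (by omega) hblack,
      show x + (b - m - 1) + 1 = x + 1 + b - m - 1 by omega]
    exact ih fun a ha ham => hcol a (by omega) ham

end upperWord

section chain

variable {m n : ℕ} {col : ℕ × ℕ → Bool}

def IsWhiteNW (m n : ℕ) (col : ℕ × ℕ → Bool) (x y a b : ℕ) : Prop :=
  InGrid m n (a, b) ∧ col (a, b) = false ∧ x ≤ a ∧ b ≤ y

def IsNearestWhiteNW (m n : ℕ) (col : ℕ × ℕ → Bool) (x y a b : ℕ) : Prop :=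
  IsWhiteNW m n col x y a b ∧ ∀ a' b', IsWhiteNW m n col x y a' b' → a ≤ a' ∧ b' ≤ b

def NoWhiteNW (m n : ℕ) (col : ℕ × ℕ → Bool) (x y : ℕ) : Prop :=
  ∀ a b, ¬ IsWhiteNW m n col x y a b

/-- The chain of `IsChainRootedAt` with its two starting rules merged (a white root is its own
nearest white square weakly north-west) and `b < Y i` written as `b ≤ Y i - 1`; the root may
lie outside the grid. -/
structure IsNWChain (m n : ℕ) (col : ℕ × ℕ → Bool) (x y t : ℕ) (X Y : ℕ → ℕ) : Prop where
  head : 1 ≤ t → IsNearestWhiteNW m n col x y (X 1) (Y 1)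
  step : ∀ i, 1 ≤ i → i < t →
    IsNearestWhiteNW m n col (X i + 1) (Y i - 1) (X (i + 1)) (Y (i + 1))
  nil : t = 0 → NoWhiteNW m n col x y
  last : 1 ≤ t → NoWhiteNW m n col (X t + 1) (Y t - 1)

lemma IsWhiteNW.mono {x y x' y' a b : ℕ} (h : IsWhiteNW m n col x' y' a b) (hx : x ≤ x')
    (hy : y' ≤ y) : IsWhiteNW m n col x y a b :=
  ⟨h.1, h.2.1, hx.trans h.2.2.1, h.2.2.2.trans hy⟩

lemma noWhiteNW_of_outside {x y : ℕ} (h : m < x ∨ y ≤ m) : NoWhiteNW m n col x y :=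
  fun _ _ hw => by unfold IsWhiteNW InGrid at hw; omega

lemma isWhiteNW_pred_iff {x y a b : ℕ} (hy : 1 ≤ y) :
    IsWhiteNW m n col (x + 1) (y - 1) a b ↔
      InGrid m n (a, b) ∧ col (a, b) = false ∧ x < a ∧ b < y := by
  simp only [IsWhiteNW, Nat.add_one_le_iff, Nat.le_sub_one_iff_lt hy]

lemma _root_.IsChainRootedAt.isNWChain {x y t : ℕ} {X Y : ℕ → ℕ}
    (h : IsChainRootedAt m n col x y t X Y) : IsNWChain m n col x y t X Y := by
  obtain ⟨hmem, hwhite, hblack, hnil, hstep, hlast⟩ := h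
  have hY : ∀ i, 1 ≤ i → i ≤ t → 1 ≤ Y i := fun i hi hit => by
    have := (hmem i hi hit).1; unfold InGrid at this; omega
  refine ⟨fun ht => ?_, fun i hi hit => ?_, fun ht a b hw => ?_, fun ht a b hw => ?_⟩
  · cases hc : col (x, y)
    · obtain ⟨-, hX1, hY1⟩ := hwhite hc
      exact ⟨⟨(hmem 1 le_rfl ht).1, (hmem 1 le_rfl ht).2, hX1.ge, hY1.le⟩,
        fun a b hw => ⟨hX1 ▸ hw.2.2.1, hY1 ▸ hw.2.2.2⟩⟩
    · obtain ⟨hx, hy, hmin⟩ := hblack hc ht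
      exact ⟨⟨(hmem 1 le_rfl ht).1, (hmem 1 le_rfl ht).2, hx, hy⟩,
        fun a b hw => hmin a b hw.1 hw.2.1 hw.2.2.1 hw.2.2.2⟩
  · obtain ⟨hx, hy, hmin⟩ := hstep i hi hit
    refine ⟨(isWhiteNW_pred_iff (hY i hi hit.le)).mpr ⟨(hmem _ (by omega) hit).1,
      (hmem _ (by omega) hit).2, hx, hy⟩, fun a b hw => ?_⟩
    obtain ⟨hg, hc, ha, hb⟩ := (isWhiteNW_pred_iff (hY i hi hit.le)).mp hw
    exact hmin a b hg hc ha hb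
  · exact hnil ht a b hw.1 hw.2.1 hw.2.2.1 hw.2.2.2
  · obtain ⟨hg, hc, ha, hb⟩ := (isWhiteNW_pred_iff (hY t ht le_rfl)).mp hw
    exact hlast ht a b hg hc ha hb

namespace IsNWChain

variable {x y t : ℕ} {X Y : ℕ → ℕ}

lemma eq_zero (h : IsNWChain m n col x y t X Y) (hno : NoWhiteNW m n col x y) : t = 0 := by
  by_contra ht
  exact hno _ _ (h.head (by omega)).1

lemma tail (h : IsNWChain m n col x y t X Y) (ht : 1 ≤ t) :
    IsNWChain m n col (X 1 + 1) (Y 1 - 1) (t - 1) (fun i => X (i + 1)) (fun i => Y (i + 1)) where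
  head ht' := h.step 1 le_rfl (by omega)
  step i hi hit := h.step (i + 1) (by omega) (by omega)
  nil ht' := by
    obtain rfl : t = 1 := by omega
    exact h.last le_rfl
  last ht' := by rw [show t - 1 + 1 = t by omega]; exact h.last ht

lemma isWhiteNW (h : IsNWChain m n col x y t X Y) {i : ℕ} (hi : 1 ≤ i) (hit : i ≤ t) :
    IsWhiteNW m n col x y (X i) (Y i) := by
  induction i, hi using Nat.le_induction with
  | base => exact (h.head hit).1
  | succ i hi ih =>
    have hw := ih (by omega)
    exact (h.step i hi hit).1.mono (by have := hw.2.2.1; omega) (by have := hw.2.2.2; omega)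

lemma image_X_subset (h : IsNWChain m n col x y t X Y) : (Icc 1 t).image X ⊆ Icc x m := by
  simp only [subset_iff, mem_image, mem_Icc]
  rintro _ ⟨i, hi, rfl⟩
  have := h.isWhiteNW hi.1 hi.2; unfold IsWhiteNW InGrid at this; omega

lemma image_Y_subset (h : IsNWChain m n col x y t X Y) : (Icc 1 t).image Y ⊆ Icc (m + 1) y := by
  simp only [subset_iff, mem_image, mem_Icc]
  rintro _ ⟨i, hi, rfl⟩
  have := h.isWhiteNW hi.1 hi.2; unfold IsWhiteNW InGrid at this; omega

lemma of_row_black (h : IsNWChain m n col x y t X Y)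
    (hrow : ∀ b, m + 1 ≤ b → b ≤ y → col (x, b) = true) : IsNWChain m n col (x + 1) y t X Y where
  head ht := by
    obtain ⟨hw, hmin⟩ := h.head ht
    have hX : X 1 ≠ x := fun hX => by
      have := hrow (Y 1) hw.1.2.2.1 hw.2.2.2; rw [← hX, hw.2.1] at this; simp at this
    exact ⟨⟨hw.1, hw.2.1, by have := hw.2.2.1; omega, hw.2.2.2⟩,
      fun a b hw' => hmin a b (hw'.mono (by omega) le_rfl)⟩
  step := h.step
  nil ht a b hw := h.nil ht a b (hw.mono (by omega) le_rfl)
  last := h.last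

lemma head_eq (h : IsNWChain m n col x y t X Y) {c : ℕ} (hw : IsWhiteNW m n col x y x c)
    (hrow : ∀ b, c < b → b ≤ y → col (x, b) = true) : 1 ≤ t ∧ X 1 = x ∧ Y 1 = c := by
  have ht : 1 ≤ t := Nat.one_le_iff_ne_zero.mpr fun ht => h.nil ht x c hw
  obtain ⟨hw1, hmin⟩ := h.head ht
  have hX : X 1 = x := le_antisymm (hmin x c hw).1 hw1.2.2.1
  refine ⟨ht, hX, le_antisymm ?_ (hmin x c hw).2⟩
  by_contra hlt
  have := hrow (Y 1) (by omega) hw1.2.2.2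
  rw [← hX, hw1.2.1] at this; simp at this

end IsNWChain

end chain

lemma _root_.IsCauchon.column_black {m n : ℕ} {col : ℕ × ℕ → Bool} (hC : IsCauchon m n col)
    {x b c : ℕ} (hg : InGrid m n (x, b)) (hb : col (x, b) = true) (hc : m + 1 ≤ c) (hcb : c < b)
    (hw : col (x, c) = false) : ∀ a, x < a → a ≤ m → col (a, b) = true := by
  refine (hC x b hg hb).resolve_left fun hrow => ?_
  rw [hrow c hc hcb] at hw
  exact Bool.noConfusion hw

lemma image_Icc_one_eq_insert {β : Type*} [DecidableEq β] (f : ℕ → β) {t : ℕ} (ht : 1 ≤ t) :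
    (Icc 1 t).image f = insert (f 1) ((Icc 1 (t - 1)).image fun i => f (i + 1)) := by
  rw [← insert_Icc_add_one_left_eq_Icc ht, image_insert,
    show (fun i => f (i + 1)) = f ∘ (· + 1) from rfl, ← image_image, image_add_right_Icc,
    Nat.sub_add_cancel ht]

section invariant

variable (m n : ℕ) (col : ℕ × ℕ → Bool)

/-- `(r, c)` is a box on the south-east border of the rows `x, …, m`, the column `c = m` left of
the grid included. -/
def IsSEBorder (x r c : ℕ) : Prop :=
  (r = x ∧ m ≤ c ∧ c ≤ m + n) ∨ (x < r ∧ r ≤ m ∧ c = m + n)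

/-- `r + c - m - 1` is the label `k` of the box `(r, c)`. -/
def ChainImageFormula (x r c : ℕ) : Prop :=
  ∀ t X Y, IsNWChain m n col r c t X Y →
    (Icc x (r + c - m - 1)).image (upperWord m n col x) =
      Ico x r ∪ (Icc 1 t).image X ∪ (Icc (m + 1) c \ (Icc 1 t).image Y)

variable {m n col}

lemma chainImageFormula_top {c : ℕ} (hc : m ≤ c) : ChainImageFormula m n col (m + 1) (m + 1) c := by
  intro t X Y h
  obtain rfl := h.eq_zero (noWhiteNW_of_outside (Or.inl (Nat.lt_succ_self m)))
  rw [upperWord_succ_self, Perm.coe_one, image_id, show m + 1 + c - m - 1 = c by omega]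
  simp

lemma chainImageFormula_left {x : ℕ} (hx : 1 ≤ x) : ChainImageFormula m n col x x m := by
  intro t X Y h
  obtain rfl := h.eq_zero (noWhiteNW_of_outside (Or.inr le_rfl))
  rw [Icc_eq_empty (by omega)]
  simp

lemma chainImageFormula_of_lt {x r : ℕ} (hxm : x ≤ m) (hr : x < r)
    (ih : ChainImageFormula m n col (x + 1) r (m + n)) :
    ChainImageFormula m n col x r (m + n) := by
  intro t X Y h
  rw [upperWord_eq_mul m n col hxm, Perm.coe_mul, ← image_image,
    image_swapWord_Icc _ _ (by omega), ← insert_Icc_add_one_left_eq_Icc (by omega), image_insert,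
    upperWord_apply_of_lt m n col (Nat.lt_succ_self x), ih t X Y h,
    ← insert_Ico_add_one_left_eq_Ico hr, insert_union, insert_union]

lemma image_upperWord_Icc_of_columns_black {x c₁ c₂ : ℕ} (hx1 : 1 ≤ x) (hx : x ≤ m + 1)
    (hc₁ : m + 1 ≤ c₁) (hc₂ : c₂ ≤ m + n)
    (hcol : ∀ a b, x ≤ a → a ≤ m → c₁ ≤ b → b ≤ c₂ → col (a, b) = true) :
    (Icc (x + c₁ - m - 1) (x + c₂ - m - 1)).image (upperWord m n col x) = Icc c₁ c₂ := by
  rw [image_congr (g := fun v => v + m + 1 - x) fun v hv => ?_]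
  · ext b
    simp only [mem_image, mem_Icc]
    constructor
    · rintro ⟨v, hv, rfl⟩; omega
    · exact fun hb => ⟨x + b - m - 1, by omega, by omega⟩
  · have hv := mem_Icc.mp hv
    have := upperWord_apply_of_column_black m n col hx (b := v + m + 1 - x) (by omega) (by omega)
      fun a ha ham => hcol a _ ha ham (by omega) (by omega)
    rwa [show x + (v + m + 1 - x) - m - 1 = v by omega] at this

lemma image_upperWord_eq_image_erase {x c : ℕ} (hxm : x ≤ m) (hc : m + 1 ≤ c) (hcn : c ≤ m + n) :
    (Icc x (x + c - m - 1)).image (upperWord m n col x) =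
      ((Icc x (x + (c - m))).erase (swapWord x (rowColour m col x) (c - m) (x + (c - m)))).image
        (upperWord m n col (x + 1)) := by
  rw [upperWord_eq_mul m n col hxm, Perm.coe_mul, ← image_image,
    show Icc x (x + c - m - 1) = Ico x (x + (c - m)) by ext; simp only [mem_Icc, mem_Ico]; omega,
    image_swapWord_Ico _ _ (by omega)]

lemma black_run_of_swapWord_apply_self (m : ℕ) (col : ℕ × ℕ → Bool) (x : ℕ) {c δ : ℕ} (hc : m + 1 ≤ c)
    (hδ : swapWord x (rowColour m col x) (c - m) (x + (c - m)) = δ) :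
    (x ≤ δ ∧ δ ≤ x + (c - m)) ∧ (∀ b, m + δ - x < b → b ≤ c → col (x, b) = true) ∧
      (x < δ → col (x, m + δ - x) = false) := by
  have hr : x ≤ δ ∧ δ ≤ x + (c - m) := hδ ▸ mem_Icc.mp (swapWord_mem_Icc _ _ (by simp))
  refine ⟨hr, fun b hb hbc => ?_, fun hlt => ?_⟩
  · have := black_of_swapWord_apply_self_le x (rowColour m col x) (j := c - m) (i := b - m - 1)
      (by omega) (by omega)
    rwa [rowColour, show m + 1 + (b - m - 1) = b by omega] at this
  · have := white_of_lt_swapWord_apply_self x (rowColour m col x) (hδ ▸ hlt)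
    rwa [hδ, rowColour, show m + 1 + (δ - x - 1) = m + δ - x by omega] at this

lemma chainImageFormula_low (hC : IsCauchon m n col) {x c : ℕ} (hx1 : 1 ≤ x) (hxm : x ≤ m)
    (hc : m + 1 ≤ c) (hcn : c ≤ m + n)
    (ih : ∀ c', m ≤ c' → c' ≤ c → ChainImageFormula m n col (x + 1) (x + 1) c') :
    ChainImageFormula m n col x x c := by
  intro t X Y h
  obtain ⟨hδ, hblack, hend⟩ := black_run_of_swapWord_apply_self m col x hc rfl
  rw [image_upperWord_eq_image_erase hxm hc hcn]
  generalize swapWord x (rowColour m col x) (c - m) (x + (c - m)) = δ at hδ hblack hend ⊢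
  rcases hδ.1.eq_or_lt with rfl | hδx
  · rw [Icc_erase_left, ← Icc_add_one_left_eq_Ioc,
      show x + (c - m) = x + 1 + c - m - 1 by omega,
      ih c (by omega) le_rfl t X Y (h.of_row_black fun b hb hbc => hblack b (by omega) hbc)]
    simp
  · set c' := m + δ - x
    have hwhite : col (x, c') = false := hend hδx
    obtain ⟨ht, hX1, hY1⟩ := h.head_eq ⟨⟨hx1, hxm, by omega, by omega⟩, hwhite, le_rfl, by omega⟩
      hblack
    have htail := h.tail ht
    rw [hX1, hY1] at htail
    have hsplit : (Icc x (x + (c - m))).erase δ =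
        insert x (Icc (x + 1) (x + 1 + (c' - 1) - m - 1)) ∪
          Icc (x + 1 + (c' + 1) - m - 1) (x + 1 + c - m - 1) := by
      ext z; simp only [mem_erase, mem_Icc, mem_insert, mem_union]; omega
    have hpipes := image_upperWord_Icc_of_columns_black (col := col) (x := x + 1) (c₁ := c' + 1)
      (c₂ := c) (by omega) (by omega) (by omega) hcn fun a b ha ham hb hbc =>
        hC.column_black ⟨hx1, hxm, by omega, hcn.trans' hbc⟩ (hblack b (by omega) hbc) (by omega)
          (by omega) hwhite a (by omega) ham
    have hYt := htail.image_Y_subset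
    rw [hsplit, image_union, image_insert, upperWord_apply_of_lt m n col (Nat.lt_succ_self x),
      ih (c' - 1) (by omega) (by omega) _ _ _ htail, hpipes, image_Icc_one_eq_insert X ht,
      image_Icc_one_eq_insert Y ht, hX1, hY1]
    ext z
    have := @hYt z
    simp only [mem_union, mem_insert, mem_Ico, mem_Icc, mem_sdiff] at this ⊢
    grind

end invariant

lemma chainImageFormula_of_isSEBorder {m n : ℕ} {col : ℕ × ℕ → Bool} (hC : IsCauchon m n col)
    {x r c : ℕ} (hx1 : 1 ≤ x) (hx : x ≤ m + 1) (h : IsSEBorder m n x r c) :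
    ChainImageFormula m n col x r c := by
  induction hx using Nat.decreasingInduction generalizing r c with
  | self =>
    rcases h with ⟨rfl, hc, -⟩ | ⟨hr, hrm, -⟩
    · exact chainImageFormula_top hc
    · omega
  | of_succ x hx ih =>
    rcases h with ⟨rfl, hc, hcn⟩ | ⟨hr, hrm, rfl⟩
    · rcases hc.eq_or_lt with rfl | hc
      · exact chainImageFormula_left hx1
      · exact chainImageFormula_low hC hx1 (by omega) hc hcn fun c' hc' hc'c =>
          ih (by omega) (Or.inl ⟨rfl, hc', by omega⟩)
    · refine chainImageFormula_of_lt (by omega) hr (ih (by omega) ?_)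
      rcases Nat.lt_or_ge (x + 1) r with hr' | hr'
      · exact Or.inr ⟨hr', hrm, rfl⟩
      · exact Or.inl ⟨by omega, by omega, le_rfl⟩

lemma rows_cols_of_eq_union {I A B : Finset ℕ} {m n s : ℕ} (hsm : s < m) (hA : A ⊆ Icc (s + 1) m)
    (hB : B ⊆ Icc (m + 1) (m + n)) (hI : I = Icc 1 s ∪ A ∪ (Icc (m + 1) (m + n) \ B)) :
    Icc 1 s ⊆ I ∩ Icc 1 m ∧ A = (I ∩ Icc 1 m) \ Icc 1 s ∧
      B = Icc (m + 1) (m + n) \ (I ∩ Icc (m + 1) (m + n)) := by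
  subst hI
  refine ⟨fun z hz => ?_, ?_, ?_⟩
  · simp only [mem_inter, mem_union, mem_Icc] at hz ⊢; omega
  · ext z; have := @hA z; simp only [mem_inter, mem_union, mem_Icc, mem_sdiff] at this ⊢; grind
  · ext z; have := @hA z; have := @hB z
    simp only [mem_inter, mem_union, mem_Icc, mem_sdiff] at *; grind

end CauchonDiagram

open CauchonDiagram in
theorem chain_at_boxSE_rows_cols_high_general
    (m n : ℕ)
    (col : ℕ × ℕ → Bool) (hC : IsCauchon m n col)
    (k : ℕ) (hk1 : n + 1 ≤ k) (hkn : k ≤ m + n - 1)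
    (t : ℕ) (X Y : ℕ → ℕ)
    (hchain : IsChainRootedAt m n col (boxSE m n k).1 (boxSE m n k).2 t X Y) :
    Finset.Icc 1 (k - n) ⊆
      Finset.image (fun j => assocPerm m n col j) (Finset.Icc 1 k) ∩ Finset.Icc 1 m ∧
    Finset.image X (Finset.Icc 1 t) =
      (Finset.image (fun j => assocPerm m n col j) (Finset.Icc 1 k) ∩ Finset.Icc 1 m) \
        Finset.Icc 1 (k - n) ∧
    Finset.image Y (Finset.Icc 1 t) =
      Finset.Icc (m + 1) (m + n) \
        (Finset.image (fun j => assocPerm m n col j) (Finset.Icc 1 k) ∩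
          Finset.Icc (m + 1) (m + n)) := by
  rw [boxSE, if_neg (by omega)] at hchain
  have h := hchain.isNWChain
  have hI := chainImageFormula_of_isSEBorder hC le_rfl (by omega)
    (Or.inr ⟨by omega, by omega, rfl⟩) t X Y h
  rw [← assocPerm_eq_upperWord_one, show k - n + 1 + (m + n) - m - 1 = k by omega,
    Finset.Ico_add_one_right_eq_Icc] at hI
  exact rows_cols_of_eq_union (by omega) h.image_X_subset h.image_Y_subset hI

/-- Let `col` be an `m × n` Cauchon diagram with associated permutation `v`, let
`k ∈ {n+1,...,m+n-1}`, put `I_k = v({1,...,k})`, and let `(X 1, Y 1),...,(X t, Y t)` be the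
chain rooted at box `k` on the south-east border.  Then `{1,...,k-n} ⊆ p₁(I_k)`,
`{X 1,...,X t} = p₁(I_k) \ {1,...,k-n}`, and `{Y 1,...,Y t} = {m+1,...,m+n} \ p₂(I_k)`. -/
theorem chain_at_boxSE_rows_cols_high
    (m n : ℕ) (hm : 2 ≤ m) (hn : 2 ≤ n)
    (col : ℕ × ℕ → Bool) (hC : IsCauchon m n col)
    (k : ℕ) (hk1 : n + 1 ≤ k) (hkn : k ≤ m + n - 1)
    (t : ℕ) (X Y : ℕ → ℕ)
    (hchain : IsChainRootedAt m n col (boxSE m n k).1 (boxSE m n k).2 t X Y) :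
    Finset.Icc 1 (k - n) ⊆
      Finset.image (fun j => assocPerm m n col j) (Finset.Icc 1 k) ∩ Finset.Icc 1 m ∧
    Finset.image X (Finset.Icc 1 t) =
      (Finset.image (fun j => assocPerm m n col j) (Finset.Icc 1 k) ∩ Finset.Icc 1 m) \
        Finset.Icc 1 (k - n) ∧
    Finset.image Y (Finset.Icc 1 t) =
      Finset.Icc (m + 1) (m + n) \
        (Finset.image (fun j => assocPerm m n col j) (Finset.Icc 1 k) ∩
          Finset.Icc (m + 1) (m + n)) :=
  chain_at_boxSE_rows_cols_high_general m n col hC k hk1 hkn t X Y hchain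
end
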